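/- arXiv:2506.13532 — 8 statements merged into one kernel-verified Lean document; each statement's English description precedes it below -/
import Mathlib

section
/- Let O_K be a ring of integers (of a number field) with class number 1, let O ⊆ O_K be an order with conductor 𝔣 = {α ∈ O_K : α·O_K ⊆ O}, let α₁, α₂, …, α_m be irreducible elements of O_K, and let r ∈ 𝔣 be irreducible in O_K. Then r·α₁·α₂⋯α_m is irreducible in O if and only if there is no unit u of O_K and nonempty subset S ⊆ {1,…,m} such that u·∏_{i∈S} αᵢ lies in O. -/
open NumberField BigOperators

/-- In a nontrivial commutative ring all of whose elements are integral over `ℤ`,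
the inverse of a unit whose value lies in a subring also lies in the subring. -/
lemma aux_inv_mem {R : Type*} [CommRing R] [Nontrivial R]
    (hint : ∀ x : R, IsIntegral ℤ x) (O : Subring R) (u : Rˣ) (hu : (u : R) ∈ O) :
    ((u⁻¹ : Rˣ) : R) ∈ O := by
  obtain ⟨p, pm, hp⟩ := hint ((u⁻¹ : Rˣ) : R)
  set v : R := ((u⁻¹ : Rˣ) : R) with hvdef
  set n := p.natDegree with hn
  have hn1 : 1 ≤ n := by
    by_contra h
    have h0 : n = 0 := by omega
    rw [pm.natDegree_eq_zero.mp h0] at hp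
    simp at hp
  rw [Polynomial.eval₂_eq_sum_range] at hp
  have huv : (u : R) * v = 1 := u.mul_inv
  have key : v = -∑ i ∈ Finset.range n,
      algebraMap ℤ R (p.coeff i) * (u : R) ^ (n - 1 - i) := by
    have h2 := congrArg (fun y => (u : R) ^ (n - 1) * y) hp
    simp only [mul_zero, Finset.mul_sum] at h2
    rw [Finset.sum_range_succ] at h2
    have hlast : (u : R) ^ (n - 1) * (algebraMap ℤ R (p.coeff n) * v ^ n) = v := by
      have h3 : (u : R) ^ (n - 1) * v ^ (n - 1) = 1 := by
        rw [← mul_pow, huv, one_pow]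
      have h4 : v ^ n = v ^ (n - 1) * v := by
        rw [← pow_succ]; congr 1; omega
      have hc1 : p.coeff n = 1 := pm.coeff_natDegree
      rw [hc1, map_one, one_mul, h4, ← mul_assoc, h3, one_mul]
    have hterm : ∀ i ∈ Finset.range n,
        (u : R) ^ (n - 1) * (algebraMap ℤ R (p.coeff i) * v ^ i)
          = algebraMap ℤ R (p.coeff i) * (u : R) ^ (n - 1 - i) := by
      intro i hi
      rw [Finset.mem_range] at hi
      have h5 : (u : R) ^ (n - 1) = (u : R) ^ (n - 1 - i) * (u : R) ^ i := by
        rw [← pow_add]; congr 1; omega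
      have h6 : (u : R) ^ i * v ^ i = 1 := by rw [← mul_pow, huv, one_pow]
      calc (u : R) ^ (n - 1) * (algebraMap ℤ R (p.coeff i) * v ^ i)
          = algebraMap ℤ R (p.coeff i) * ((u : R) ^ (n - 1 - i) * ((u : R) ^ i * v ^ i)) := by
            rw [h5]; ring
        _ = algebraMap ℤ R (p.coeff i) * (u : R) ^ (n - 1 - i) := by rw [h6, mul_one]
    rw [Finset.sum_congr rfl hterm, hlast] at h2
    rw [add_comm] at h2
    exact eq_neg_of_add_eq_zero_left h2
  rw [key]
  refine O.neg_mem (Subring.sum_mem O fun i _ => O.mul_mem ?_ (O.pow_mem hu _))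
  simpa using intCast_mem O (p.coeff i)

/-- An element of a subring of the ring of integers which is a unit in the ring of
integers is a unit in the subring. -/
lemma aux_isUnit {K : Type*} [Field K] [NumberField K] (O : Subring (𝓞 K)) (x : ↥O)
    (h : IsUnit (x : 𝓞 K)) : IsUnit x := by
  obtain ⟨u, hu⟩ := h
  have hmem : ((u⁻¹ : (𝓞 K)ˣ) : 𝓞 K) ∈ O :=
    aux_inv_mem (fun y => RingOfIntegers.isIntegral y) O u (hu ▸ x.2)
  refine IsUnit.of_mul_eq_one (a := x) ⟨_, hmem⟩ (Subtype.ext ?_)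
  show (x : 𝓞 K) * ((u⁻¹ : (𝓞 K)ˣ) : 𝓞 K) = 1
  rw [← hu, u.mul_inv]

/-- A divisor of a finite product of primes is associated to a subproduct. -/
lemma aux_dvd_prod {R : Type*} [CommMonoidWithZero R] [IsCancelMulZero R] {ι : Type*} [DecidableEq ι]
    (α : ι → R) (s : Finset ι) (hp : ∀ i ∈ s, Prime (α i)) :
    ∀ a : R, a ∣ ∏ i ∈ s, α i → ∃ S ⊆ s, Associated a (∏ i ∈ S, α i) := by
  induction s using Finset.induction_on with
  | empty =>
      intro a ha
      simp only [Finset.prod_empty] at ha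
      exact ⟨∅, Finset.Subset.refl _, by
        rw [Finset.prod_empty]
        exact associated_one_iff_isUnit.mpr (isUnit_of_dvd_one ha)⟩
  | @insert j t hj ih =>
      intro a ha
      rw [Finset.prod_insert hj] at ha
      have hpj : Prime (α j) := hp j (Finset.mem_insert_self _ _)
      have hpt : ∀ i ∈ t, Prime (α i) := fun i hi => hp i (Finset.mem_insert_of_mem hi)
      by_cases hdvd : α j ∣ a
      · obtain ⟨a', rfl⟩ := hdvd
        have ha' : a' ∣ ∏ i ∈ t, α i := (mul_dvd_mul_iff_left hpj.ne_zero).mp ha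
        obtain ⟨S, hSsub, hassoc⟩ := ih hpt a' ha'
        refine ⟨insert j S, Finset.insert_subset_insert _ hSsub, ?_⟩
        rw [Finset.prod_insert (fun h => hj (hSsub h))]
        exact hassoc.mul_left (α j)
      · obtain ⟨c, hc⟩ := ha
        have hjc : α j ∣ c := by
          have : α j ∣ a * c := ⟨∏ i ∈ t, α i, hc.symm⟩
          exact (hpj.2.2 _ _ this).resolve_left hdvd
        obtain ⟨c', rfl⟩ := hjc
        have hat : a ∣ ∏ i ∈ t, α i := by
          refine ⟨c', mul_left_cancel₀ hpj.ne_zero ?_⟩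
          rw [hc, mul_left_comm]
        obtain ⟨S, hSsub, hassoc⟩ := ih hpt a hat
        exact ⟨S, hSsub.trans (Finset.subset_insert _ _), hassoc⟩

/-- Let `𝓞 K` be a ring of integers with class number 1, `O ⊆ 𝓞 K` an order
(a subring which is a free `ℤ`-module of full rank), `α₁, …, α_m` irreducible elements of
`𝓞 K`, and `r` an irreducible element of `𝓞 K` lying in the conductor
`𝔣 = {α : α • 𝓞 K ⊆ O}`.  Then `r * α₁ ⋯ α_m` is irreducible in `O` iff there is no unit
`u` of `𝓞 K` and nonempty subset `S ⊆ {1, …, m}` with `u * ∏_{i ∈ S} α i ∈ O`. -/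
theorem stmt_0 {K : Type*} [Field K] [NumberField K]
    (hK : NumberField.classNumber K = 1)
    (O : Subring (𝓞 K)) (hO : Module.finrank ℤ ↥O = Module.finrank ℚ K)
    (m : ℕ) (α : Fin m → 𝓞 K) (hα : ∀ i, Irreducible (α i))
    (r : 𝓞 K) (hr : Irreducible r)
    (hrf : ∀ β : 𝓞 K, r * β ∈ O) :
    Irreducible (⟨r * ∏ i, α i, hrf (∏ i, α i)⟩ : ↥O) ↔
      ¬ ∃ (u : (𝓞 K)ˣ) (S : Finset (Fin m)), S.Nonempty ∧
        ((u : 𝓞 K) * ∏ i ∈ S, α i) ∈ O := by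
  haveI hPID : IsPrincipalIdealRing (𝓞 K) := NumberField.classNumber_eq_one_iff.mp hK
  have hprime : ∀ i, Prime (α i) :=
    fun i => UniqueFactorizationMonoid.irreducible_iff_prime.mp (hα i)
  have hrp : Prime r := UniqueFactorizationMonoid.irreducible_iff_prime.mp hr
  constructor
  · intro hirr
    rintro ⟨u, S, hS, hmem⟩
    have hbmem : r * (((u⁻¹ : (𝓞 K)ˣ) : 𝓞 K) * ∏ i ∈ Sᶜ, α i) ∈ O := hrf _
    have heq : (⟨r * ∏ i, α i, hrf (∏ i, α i)⟩ : ↥O)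
        = ⟨_, hmem⟩ * ⟨_, hbmem⟩ := by
      apply Subtype.ext
      show r * ∏ i, α i
        = ((u : 𝓞 K) * ∏ i ∈ S, α i)
          * (r * (((u⁻¹ : (𝓞 K)ˣ) : 𝓞 K) * ∏ i ∈ Sᶜ, α i))
      have h1 : ((u : 𝓞 K) * ∏ i ∈ S, α i)
          * (r * (((u⁻¹ : (𝓞 K)ˣ) : 𝓞 K) * ∏ i ∈ Sᶜ, α i))
          = ((u : 𝓞 K) * ((u⁻¹ : (𝓞 K)ˣ) : 𝓞 K))
            * (r * ((∏ i ∈ S, α i) * ∏ i ∈ Sᶜ, α i)) := by ring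
      rw [h1, u.mul_inv, one_mul, Finset.prod_mul_prod_compl]
    rcases hirr.isUnit_or_isUnit heq with h | h
    · have hKu : IsUnit ((u : 𝓞 K) * ∏ i ∈ S, α i) := h.map O.subtype
      have h2 : IsUnit (∏ i ∈ S, α i) :=
        isUnit_of_dvd_unit (dvd_mul_left _ _) hKu
      obtain ⟨i, hi⟩ := hS
      exact (hα i).not_isUnit (isUnit_of_dvd_unit (Finset.dvd_prod_of_mem α hi) h2)
    · have hKb : IsUnit (r * (((u⁻¹ : (𝓞 K)ˣ) : 𝓞 K) * ∏ i ∈ Sᶜ, α i)) := h.map O.subtype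
      exact hr.not_isUnit (isUnit_of_dvd_unit (dvd_mul_right r _) hKb)
  · intro hno
    constructor
    · intro hu
      have hKu : IsUnit (r * ∏ i, α i) := hu.map O.subtype
      exact hr.not_isUnit (isUnit_of_dvd_unit (dvd_mul_right r _) hKu)
    · rintro a b hab
      have habK : r * ∏ i, α i = (a : 𝓞 K) * (b : 𝓞 K) := congrArg Subtype.val hab
      have claim : ∀ x y : ↥O, r * ∏ i, α i = (x : 𝓞 K) * (y : 𝓞 K) →
          r ∣ (y : 𝓞 K) → IsUnit x := by
        rintro x y hxy ⟨y', hy'⟩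
        have hx_dvd : (x : 𝓞 K) ∣ ∏ i, α i := by
          refine ⟨y', mul_left_cancel₀ hr.ne_zero ?_⟩
          rw [hxy, hy']; ring
        obtain ⟨S, -, hassoc⟩ :=
          aux_dvd_prod α Finset.univ (fun i _ => hprime i) _ hx_dvd
        obtain ⟨v, hv⟩ := hassoc
        rcases S.eq_empty_or_nonempty with rfl | hSne
        · rw [Finset.prod_empty] at hv
          exact aux_isUnit O x (IsUnit.of_mul_eq_one _ hv)
        · exfalso
          apply hno
          refine ⟨v⁻¹, S, hSne, ?_⟩
          have hx : ((v⁻¹ : (𝓞 K)ˣ) : 𝓞 K) * ∏ i ∈ S, α i = (x : 𝓞 K) := by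
            rw [← hv]
            calc ((v⁻¹ : (𝓞 K)ˣ) : 𝓞 K) * ((x : 𝓞 K) * (v : 𝓞 K))
                = (x : 𝓞 K) * ((v : 𝓞 K) * ((v⁻¹ : (𝓞 K)ˣ) : 𝓞 K)) := by ring
              _ = (x : 𝓞 K) := by rw [v.mul_inv, mul_one]
          rw [hx]
          exact x.2
      have hrd : r ∣ (a : 𝓞 K) * (b : 𝓞 K) := ⟨∏ i, α i, habK.symm⟩
      rcases hrp.2.2 _ _ hrd with h | h
      · exact Or.inr (claim b a (by rw [habK]; ring) h)
      · exact Or.inl (claim a b habK h)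
end

section
/- Let O_K be a ring of integers with class number 1, and let O ⊆ O_K be an order whose conductor is a prime ideal of O_K. If D̄(O) = D_O(O_K) is finite, then the elasticity ρ(O) is finite. -/
set_option maxHeartbeats 1000000
set_option synthInstance.maxHeartbeats 1000000

open NumberField BigOperators
open scoped ENNReal

/-- The elasticity of a domain, as an extended nonnegative real:
`ρ(R) = sup { n/m | α₁⋯α_n = β₁⋯β_m with all factors irreducible }`. -/
noncomputable def elasticity (α : Type*) [CommMonoidWithZero α] : ℝ≥0∞ :=
  ⨆ (n : ℕ) (m : ℕ) (f : Fin n → α) (g : Fin m → α)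
    (_ : ∀ i, Irreducible (f i)) (_ : ∀ j, Irreducible (g j))
    (_ : ∏ i, f i = ∏ j, g j), (n : ℝ≥0∞) / (m : ℝ≥0∞)

/-- The generalized Davenport constant `D_O(R)` of a subset `O` of an atomic domain `R`:
the least `n` such that every product of `n` irreducibles of `R` has a nonempty
subproduct lying in `O` (and `⊤` if no such `n` exists). -/
noncomputable def DavenportSet (R : Type*) [CommMonoidWithZero R] (O : Set R) : ℕ∞ :=
  sInf ((↑) '' {n : ℕ | ∀ f : Fin n → R, (∀ i, Irreducible (f i)) →
    ∃ S : Finset (Fin n), S.Nonempty ∧ (∏ i ∈ S, f i) ∈ O})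

/-- The conductor `𝔣 = {α ∈ 𝓞 K : α • 𝓞 K ⊆ O}` of a subring `O` of the ring of
integers, as an ideal of `𝓞 K`. -/
def conductorIdeal {K : Type*} [Field K] [NumberField K] (O : Subring (𝓞 K)) :
    Ideal (𝓞 K) where
  carrier := {a : 𝓞 K | ∀ b : 𝓞 K, a * b ∈ O}
  add_mem' := by
    intro a b ha hb c
    simpa [add_mul] using O.add_mem (ha c) (hb c)
  zero_mem' := by
    intro b
    simpa using O.zero_mem
  smul_mem' := by
    intro c a ha b
    have h := ha (c * b)
    have e : c • a * b = a * (c * b) := by rw [smul_eq_mul]; ring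
    rw [e]; exact h

section Aux

variable {K : Type*} [Field K] [NumberField K]

lemma aux_mem_conductorIdeal {O : Subring (𝓞 K)} {a : 𝓞 K}
    (h : a ∈ conductorIdeal O) : ∀ b : 𝓞 K, a * b ∈ O := h

/-- An element of an order that is a unit in the ring of integers is a unit
in the order itself. -/
lemma aux_unit (O : Subring (𝓞 K)) (x : ↥O)
    (h : IsUnit (x : 𝓞 K)) : IsUnit x := by
  obtain ⟨y, hy⟩ := h.exists_right_inv
  haveI : Module.Finite ↥O (𝓞 K) := Module.Finite.of_restrictScalars_finite ℤ ↥O (𝓞 K)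
  obtain ⟨p, pm, hp⟩ := IsIntegral.of_finite ↥O y
  rw [← Polynomial.aeval_def] at hp
  set d := p.natDegree with hdd
  have hd1 : 1 ≤ d := by
    rcases Nat.eq_zero_or_pos d with h0 | h1
    · exfalso
      have : p = 1 := (Polynomial.Monic.natDegree_eq_zero pm).mp h0
      rw [this] at hp
      simp at hp
    · exact h1
  have hsum : Polynomial.aeval y p
      = ∑ i ∈ Finset.range (d + 1), p.coeff i • y ^ i :=
    Polynomial.aeval_eq_sum_range y
  rw [Finset.sum_range_succ] at hsum
  have hcd : p.coeff d = 1 := pm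
  rw [hcd, one_smul, hp] at hsum
  have hmul : 0 = (∑ i ∈ Finset.range d, p.coeff i • y ^ i + y ^ d) * (x : 𝓞 K) ^ (d - 1) := by
    rw [← hsum]; ring
  have e1 : y ^ d * (x : 𝓞 K) ^ (d - 1) = y := by
    have hdeq : d = 1 + (d - 1) := by omega
    calc y ^ d * (x : 𝓞 K) ^ (d - 1) = y ^ (1 + (d-1)) * (x : 𝓞 K) ^ (d - 1) := by rw [← hdeq]
    _ = y * (((x : 𝓞 K)) * y) ^ (d-1) := by rw [pow_add, mul_pow]; ring
    _ = y := by rw [hy]; simp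
  have e2 : ∀ i ∈ Finset.range d, (p.coeff i • y ^ i) * (x : 𝓞 K) ^ (d - 1)
      = p.coeff i • (x : 𝓞 K) ^ (d - 1 - i) := by
    intro i hi
    rw [Finset.mem_range] at hi
    have hdi : d - 1 = i + (d - 1 - i) := by omega
    rw [smul_mul_assoc, hdi, pow_add]
    congr 1
    calc y ^ i * ((x:𝓞 K) ^ i * (x:𝓞 K) ^ (d-1-i)) = ((x:𝓞 K)*y) ^ i * (x:𝓞 K)^(d-1-i) := by
          rw [mul_pow]; ring
    _ = (x:𝓞 K)^(d-1-i) := by rw [hy]; simp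
    _ = (x:𝓞 K) ^ (i + (d-1-i) - i) := by congr 1; omega
  rw [add_mul, Finset.sum_mul, Finset.sum_congr rfl e2, e1] at hmul
  set z : ↥O := -∑ i ∈ Finset.range d, p.coeff i * x ^ (d - 1 - i) with hz
  have hyeq : y = -∑ i ∈ Finset.range d, p.coeff i • (x : 𝓞 K) ^ (d - 1 - i) :=
    eq_neg_of_add_eq_zero_right hmul.symm
  have hzy : (z : 𝓞 K) = y := by
    rw [hyeq, hz]
    push_cast
    rfl
  refine IsUnit.of_mul_eq_one z (Subtype.ext ?_)
  push_cast [hzy]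
  exact hy

/-- The subring `O` as a `ℤ`-submodule of `𝓞 K`. -/
def subMod (O : Subring (𝓞 K)) : Submodule ℤ (𝓞 K) where
  carrier := O
  add_mem' := fun ha hb => O.add_mem ha hb
  zero_mem' := O.zero_mem
  smul_mem' := fun c x hx => O.toAddSubgroup.zsmul_mem hx c

lemma conductor_ne_bot (O : Subring (𝓞 K))
    (hO : Module.finrank ℤ ↥O = Module.finrank ℚ K) :
    conductorIdeal O ≠ ⊥ := by
  classical
  set M := subMod O with hM
  have e : ↥O ≃ₗ[ℤ] ↥M :=
    { toFun := fun x => ⟨x.1, x.2⟩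
      map_add' := fun a b => rfl
      map_smul' := fun c a => rfl
      invFun := fun x => ⟨x.1, x.2⟩
      left_inv := fun x => rfl
      right_inv := fun x => rfl }
  have hMrank : Module.finrank ℤ ↥M = Module.finrank ℤ (𝓞 K) := by
    rw [← e.finrank_eq, hO, NumberField.RingOfIntegers.rank]
  have step1 : ∀ x : 𝓞 K, ∃ m : ℤ, m ≠ 0 ∧ m • x ∈ O := by
    intro x
    by_contra hcon
    push_neg at hcon
    set b := Module.Free.chooseBasis ℤ ↥M with hb
    set ι := Module.Free.ChooseBasisIndex ℤ ↥M
    set v : Option ι → 𝓞 K := fun o => o.elim x (fun i => (b i : 𝓞 K)) with hv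
    have hbind : LinearIndependent ℤ (fun i : ι => (b i : 𝓞 K)) := by
      have := b.linearIndependent
      have h2 := this.map' M.subtype (Submodule.ker_subtype M)
      exact h2
    have hli : LinearIndependent ℤ v := by
      rw [Fintype.linearIndependent_iff]
      intro c hc
      have hsplit : c none • x + ∑ i : ι, c (some i) • (b i : 𝓞 K) = 0 := by
        rw [← hc, Fintype.sum_option]; rfl
      have hc0 : c none = 0 := by
        by_contra hne
        refine hcon (c none) hne ?_
        have : c none • x = -∑ i : ι, c (some i) • (b i : 𝓞 K) :=
          eq_neg_of_add_eq_zero_left hsplit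
        rw [this]
        refine O.toAddSubgroup.neg_mem (AddSubgroup.sum_mem _ fun i _ => ?_)
        exact O.toAddSubgroup.zsmul_mem (b i).2 _
      have hrest : ∑ i : ι, c (some i) • (b i : 𝓞 K) = 0 := by
        rw [hc0, zero_smul, zero_add] at hsplit; exact hsplit
      have := (Fintype.linearIndependent_iff.mp hbind) (fun i => c (some i)) hrest
      intro o
      cases o with
      | none => exact hc0
      | some i => exact this i
    have hcard := hli.fintype_card_le_finrank
    rw [Fintype.card_option] at hcard
    have hfin : Module.finrank ℤ ↥M = Fintype.card ι :=
      Module.finrank_eq_card_chooseBasisIndex ℤ ↥M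
    omega
  set c := Module.Free.chooseBasis ℤ (𝓞 K) with hc
  choose m hm0 hmO using fun i => step1 (c i)
  set mt : ℤ := ∏ i, m i with hmt
  have hmtne : mt ≠ 0 := Finset.prod_ne_zero_iff.mpr (fun i _ => hm0 i)
  have hall : ∀ x : 𝓞 K, mt • x ∈ O := by
    intro x
    have hN : x ∈ Submodule.span ℤ (Set.range c) := by
      rw [c.span_eq]; trivial
    induction hN using Submodule.span_induction with
    | mem y hy =>
        obtain ⟨i, rfl⟩ := hy
        have : mt • (c i) = (∏ j ∈ Finset.univ.erase i, m j) • (m i • c i) := by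
          rw [smul_smul, hmt, ← Finset.prod_erase_mul _ _ (Finset.mem_univ i)]
        rw [this]
        exact O.toAddSubgroup.zsmul_mem (hmO i) _
    | zero => simpa using O.zero_mem
    | add y z _ _ hy hz => rw [smul_add]; exact O.add_mem hy hz
    | smul a y _ hy =>
        rw [smul_comm]
        exact O.toAddSubgroup.zsmul_mem hy a
  intro hbot
  have hmem : ((mt : ℤ) : 𝓞 K) ∈ conductorIdeal O := by
    intro b
    have : ((mt : ℤ) : 𝓞 K) * b = mt • b := (zsmul_eq_mul b mt).symm
    rw [this]; exact hall b
  rw [hbot] at hmem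
  simp only [Ideal.mem_bot] at hmem
  exact hmtne (by exact_mod_cast hmem)

/-- Finset version of the Davenport property. -/
lemma dav_finset (O : Subring (𝓞 K)) {D : ℕ}
    (hDav : ∀ f : Fin D → 𝓞 K, (∀ i, Irreducible (f i)) →
      ∃ S : Finset (Fin D), S.Nonempty ∧ (∏ i ∈ S, f i) ∈ O)
    {n : ℕ} (T : Finset (Fin n)) (f : Fin n → 𝓞 K) (hT : D ≤ T.card)
    (hf : ∀ i, Irreducible (f i)) :
    ∃ S : Finset (Fin n), S ⊆ T ∧ S.Nonempty ∧ S.card ≤ D ∧ (∏ i ∈ S, f i) ∈ O := by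
  classical
  obtain ⟨T', hT'sub, hT'card⟩ := Finset.exists_subset_card_eq hT
  set e := T'.orderIsoOfFin hT'card with he
  obtain ⟨S', hS'ne, hS'mem⟩ := hDav (fun j => f (e j)) (fun j => hf _)
  have hinj : ∀ a ∈ S', ∀ b ∈ S', ((e a : Fin n)) = (e b : Fin n) → a = b := by
    intro a _ b _ hab
    exact e.injective (Subtype.ext hab)
  refine ⟨S'.image (fun j => (e j : Fin n)), ?_, hS'ne.image _, ?_, ?_⟩
  · intro i hi
    obtain ⟨j, hj, rfl⟩ := Finset.mem_image.mp hi
    exact hT'sub (e j).2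
  · exact le_trans Finset.card_image_le (by simpa using Finset.card_le_univ S')
  · rw [Finset.prod_image hinj]
    exact hS'mem

/-- A nontrivial splitting of an irreducible of `O` into two factors in `O` is absurd. -/
lemma no_split (O : Subring (𝓞 K)) {n : ℕ} (f : Fin n → 𝓞 K)
    (hf : ∀ i, Irreducible (f i)) (hmem : (∏ i, f i) ∈ O)
    (hirr : Irreducible (⟨∏ i, f i, hmem⟩ : ↥O))
    (S : Finset (Fin n)) (hS : S.Nonempty) (hSc : Sᶜ.Nonempty)
    (hβ : (∏ i ∈ S, f i) ∈ O) (hγ : (∏ i ∈ Sᶜ, f i) ∈ O) : False := by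
  classical
  have hsplit : (⟨∏ i, f i, hmem⟩ : ↥O)
      = ⟨∏ i ∈ S, f i, hβ⟩ * ⟨∏ i ∈ Sᶜ, f i, hγ⟩ := by
    refine Subtype.ext ?_
    push_cast
    exact (Finset.prod_mul_prod_compl S f).symm
  rcases hirr.isUnit_or_isUnit hsplit with hu | hu
  · have : IsUnit (∏ i ∈ S, f i) := hu.map O.subtype
    obtain ⟨i, hi⟩ := hS
    exact (hf i).not_isUnit (isUnit_of_dvd_unit (Finset.dvd_prod_of_mem f hi) this)
  · have : IsUnit (∏ i ∈ Sᶜ, f i) := hu.map O.subtype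
    obtain ⟨i, hi⟩ := hSc
    exact (hf i).not_isUnit (isUnit_of_dvd_unit (Finset.dvd_prod_of_mem f hi) this)

/-- Main combinatorial bound: a product of `n` irreducibles of `𝓞 K` that is
irreducible as an element of `O` has `n ≤ D`. -/
lemma len_le (O : Subring (𝓞 K)) (hprime : (conductorIdeal O).IsPrime)
    (hbot : conductorIdeal O ≠ ⊥) {D : ℕ}
    (hDav : ∀ f : Fin D → 𝓞 K, (∀ i, Irreducible (f i)) →
      ∃ S : Finset (Fin D), S.Nonempty ∧ (∏ i ∈ S, f i) ∈ O)
    {n : ℕ} (f : Fin n → 𝓞 K) (hf : ∀ i, Irreducible (f i))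
    (hmem : (∏ i, f i) ∈ O)
    (hirr : Irreducible (⟨∏ i, f i, hmem⟩ : ↥O)) : n ≤ D := by
  classical
  by_contra hcon
  push_neg at hcon
  by_cases hex : ∃ i₀, f i₀ ∈ conductorIdeal O
  · -- some factor lies in the conductor
    obtain ⟨i₀, hi₀⟩ := hex
    have hTcard : D ≤ (Finset.univ.erase i₀).card := by
      rw [Finset.card_erase_of_mem (Finset.mem_univ i₀), Finset.card_univ, Fintype.card_fin]
      omega
    obtain ⟨S, hSsub, hSne, _, hSmem⟩ := dav_finset O hDav (Finset.univ.erase i₀) f hTcard hf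
    have hi₀S : i₀ ∉ S := fun h => (Finset.mem_erase.mp (hSsub h)).1 rfl
    have hi₀Sc : i₀ ∈ Sᶜ := Finset.mem_compl.mpr hi₀S
    have hγ : (∏ i ∈ Sᶜ, f i) ∈ O := by
      rw [← Finset.mul_prod_erase _ _ hi₀Sc]
      exact aux_mem_conductorIdeal hi₀ _
    exact no_split O f hf hmem hirr S hSne ⟨i₀, hi₀Sc⟩ hSmem hγ
  · push_neg at hex
    obtain ⟨S, _, hSne, hScard, hSmem⟩ := dav_finset O hDav Finset.univ f
      (by rw [Finset.card_univ, Fintype.card_fin]; omega) hf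
    have hScne : Sᶜ.Nonempty := by
      rw [← Finset.card_pos, Finset.card_compl, Fintype.card_fin]
      omega
    -- β ∉ conductor
    have hβnot : (∏ i ∈ S, f i) ∉ conductorIdeal O := by
      intro h
      haveI := hprime
      obtain ⟨i, _, hi⟩ := (Ideal.IsPrime.prod_mem_iff).mp h
      exact hex i hi
    -- finite quotient, domain
    haveI hfin1 : Fintype (𝓞 K ⧸ conductorIdeal O) :=
      @Fintype.ofFinite _ (Ideal.finiteQuotientOfFreeOfNeBot _ hbot)
    haveI hfin2 : Finite (𝓞 K ⧸ conductorIdeal O) := Finite.of_fintype _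
    haveI := hprime
    set q : 𝓞 K →+* (𝓞 K ⧸ conductorIdeal O) := Ideal.Quotient.mk (conductorIdeal O) with hq
    set β := ∏ i ∈ S, f i with hβdef
    have hqβ : q β ≠ 0 := fun h => hβnot (Ideal.Quotient.eq_zero_iff_mem.mp h)
    -- find k ≥ 1 with q β ^ k = 1
    obtain ⟨a, b, hab, heq⟩ := Finite.exists_ne_map_eq_of_infinite (fun k : ℕ => q β ^ k)
    wlog hlt : a < b generalizing a b
    · exact this b a hab.symm heq.symm (by omega)
    have hk1 : q β ^ (b - a) = 1 := by
      have h1 : q β ^ a * q β ^ (b - a) = q β ^ a * 1 := by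
        rw [mul_one, ← pow_add, Nat.add_sub_cancel' hlt.le, heq]
      exact mul_left_cancel₀ (pow_ne_zero a hqβ) h1
    set k := b - a with hkdef
    have hk0 : 1 ≤ k := by omega
    have hfk : β ^ k - 1 ∈ conductorIdeal O := by
      rw [← Ideal.Quotient.eq_zero_iff_mem]
      have : q (β ^ k - 1) = q β ^ k - 1 := by
        rw [map_sub, map_pow, map_one]
      rw [this, hk1, sub_self]
    set γ := ∏ i ∈ Sᶜ, f i with hγdef
    have hβγ : β * γ = ∏ i, f i := Finset.prod_mul_prod_compl S f
    have hγO : γ ∈ O := by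
      have e : γ = β ^ (k-1) * (β * γ) - (β ^ k - 1) * γ := by
        have h2 : β ^ (k-1) * β = β ^ k := by rw [← pow_succ, Nat.sub_add_cancel hk0]
        calc γ = β ^ k * γ - (β ^ k - 1) * γ := by ring
        _ = β ^ (k-1) * (β * γ) - (β ^ k - 1) * γ := by rw [← h2]; ring
      rw [e]
      refine O.sub_mem (O.mul_mem (O.pow_mem hSmem _) ?_) ?_
      · rw [hβγ]; exact hmem
      · exact aux_mem_conductorIdeal hfk _
    exact no_split O f hf hmem hirr S hSne hScne hSmem hγO

end Aux

/-- Let `𝓞 K` be a ring of integers with class number 1 and `O ⊆ 𝓞 K` an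
order whose conductor is a prime ideal of `𝓞 K`.  If `D̄(O) = D_O(𝓞 K)` is finite, then
the elasticity `ρ(O)` is finite. -/
theorem stmt_1 {K : Type*} [Field K] [NumberField K]
    (hK : NumberField.classNumber K = 1)
    (O : Subring (𝓞 K)) (hO : Module.finrank ℤ ↥O = Module.finrank ℚ K)
    (hprime : (conductorIdeal O).IsPrime)
    (hD : DavenportSet (𝓞 K) (O : Set (𝓞 K)) ≠ ⊤) :
    elasticity ↥O ≠ ⊤ := by
  classical
  haveI hPIR : IsPrincipalIdealRing (𝓞 K) := NumberField.classNumber_eq_one_iff.mp hK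
  letI : NormalizationMonoid (𝓞 K) := UniqueFactorizationMonoid.normalizationMonoid.toNormalizationMonoid
  -- extract the Davenport constant
  have hne : {n : ℕ | ∀ f : Fin n → (𝓞 K), (∀ i, Irreducible (f i)) →
      ∃ S : Finset (Fin n), S.Nonempty ∧ (∏ i ∈ S, f i) ∈ (O : Set (𝓞 K))}.Nonempty := by
    by_contra h
    rw [Set.not_nonempty_iff_eq_empty] at h
    rw [DavenportSet, h] at hD
    simp at hD
  obtain ⟨D, hDav⟩ := hne
  have hbot := conductor_ne_bot O hO
  -- length function
  let L : 𝓞 K → ℕ := fun a => Multiset.card (UniqueFactorizationMonoid.normalizedFactors a)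
  have hLdef : ∀ a, L a = Multiset.card (UniqueFactorizationMonoid.normalizedFactors a) :=
    fun _ => rfl
  -- bounds on irreducibles of O
  have hbounds : ∀ x : ↥O, Irreducible x → 1 ≤ L (x : 𝓞 K) ∧ L (x : 𝓞 K) ≤ D := by
    intro x hx
    have hx0 : (x : 𝓞 K) ≠ 0 := fun h => hx.ne_zero (Subtype.ext h)
    have hassoc := UniqueFactorizationMonoid.prod_normalizedFactors hx0
    have h1 : 1 ≤ L (x : 𝓞 K) := by
      rw [hLdef]
      by_contra h
      push_neg at h
      have h0 : UniqueFactorizationMonoid.normalizedFactors (x : 𝓞 K) = 0 :=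
        Multiset.card_eq_zero.mp (by omega)
      rw [h0, Multiset.prod_zero] at hassoc
      have : IsUnit (x : 𝓞 K) := associated_one_iff_isUnit.mp hassoc.symm
      exact hx.not_isUnit (aux_unit O x this)
    refine ⟨h1, ?_⟩
    -- build an explicit factorization function
    set s := UniqueFactorizationMonoid.normalizedFactors (x : 𝓞 K) with hs
    obtain ⟨p, Lst, hpl⟩ : ∃ p Lst, s.toList = p :: Lst := by
      cases h : s.toList with
      | nil =>
          exfalso
          have := Multiset.length_toList s
          rw [h] at this
          simp at this
          rw [hLdef, ← hs] at h1
          omega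
      | cons a as => exact ⟨a, as, rfl⟩
    obtain ⟨u, hu⟩ := hassoc
    have hprodl : s.prod = p * Lst.prod := by
      rw [← Multiset.prod_toList, hpl, List.prod_cons]
    set F : Fin (Lst.length + 1) → 𝓞 K :=
      Fin.cons (p * u) (fun j => Lst.get j) with hF
    have hmemF : ∀ i, F i ∈ s.toList ∨ ∃ v : (𝓞 K)ˣ, ∃ w ∈ s.toList, F i = w * v := by
      intro i
      refine Fin.cases ?_ ?_ i
      · right; exact ⟨u, p, by rw [hpl]; exact List.mem_cons_self (a := p) (l := Lst), by simp [hF]⟩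
      · intro j
        left
        rw [hpl]
        simp only [hF, Fin.cons_succ]
        exact List.mem_cons_of_mem _ (Lst.get_mem j)
    have hFirr : ∀ i, Irreducible (F i) := by
      intro i
      rcases hmemF i with hin | ⟨v, w, hw, hFi⟩
      · exact UniqueFactorizationMonoid.irreducible_of_normalized_factor _
          (Multiset.mem_toList.mp hin)
      · have hwirr : Irreducible w := UniqueFactorizationMonoid.irreducible_of_normalized_factor _
          (Multiset.mem_toList.mp hw)
        have : Associated w (F i) := ⟨v, hFi.symm⟩
        exact this.irreducible hwirr
    have hFprod : ∏ i, F i = (x : 𝓞 K) := by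
      rw [Fin.prod_univ_succ]
      have h2 : ∏ j : Fin Lst.length, F j.succ = Lst.prod := by
        have : (fun j : Fin Lst.length => F j.succ) = fun j => Lst.get j := by
          funext j; simp [hF]
        rw [this, ← List.prod_ofFn, List.ofFn_get]
      rw [h2]
      have h0 : F 0 = p * u := by simp [hF]
      rw [h0, ← hu, hprodl]
      ring
    have hmemO : (∏ i, F i) ∈ O := by rw [hFprod]; exact x.2
    have hirrF : Irreducible (⟨∏ i, F i, hmemO⟩ : ↥O) := by
      have : (⟨∏ i, F i, hmemO⟩ : ↥O) = x := Subtype.ext hFprod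
      rw [this]; exact hx
    have hlen := len_le O hprime hbot hDav F hFirr hmemO hirrF
    have hcard : L (x : 𝓞 K) = Lst.length + 1 := by
      rw [hLdef, ← hs]
      have := Multiset.length_toList s
      rw [hpl] at this
      simp only [List.length_cons] at this
      omega
    omega
  -- additivity of L over products
  have hLprod : ∀ (n : ℕ) (f : Fin n → 𝓞 K), (∀ i, f i ≠ 0) →
      L (∏ i, f i) = ∑ i, L (f i) := by
    intro n
    induction n with
    | zero => intro f _; simp [hLdef, UniqueFactorizationMonoid.normalizedFactors_one]
    | succ n ih =>
        intro f hf
        rw [Fin.prod_univ_succ, Fin.sum_univ_succ, hLdef]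
        have hprodne : (∏ i : Fin n, f i.succ) ≠ 0 :=
          Finset.prod_ne_zero_iff.mpr (fun i _ => hf i.succ)
        rw [UniqueFactorizationMonoid.normalizedFactors_mul (hf 0) hprodne,
          Multiset.card_add]
        rw [← ih (fun i => f i.succ) (fun i => hf i.succ)]
        try rfl
  -- bound the elasticity
  have hle : elasticity ↥O ≤ (D : ℝ≥0∞) := by
    rw [elasticity]
    refine iSup_le fun n => iSup_le fun m => iSup_le fun f => iSup_le fun g =>
      iSup_le fun hf => iSup_le fun hg => iSup_le fun heq => ?_
    have hF0 : ∀ i, ((f i : 𝓞 K)) ≠ 0 := fun i h => (hf i).ne_zero (Subtype.ext h)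
    have hG0 : ∀ j, ((g j : 𝓞 K)) ≠ 0 := fun j h => (hg j).ne_zero (Subtype.ext h)
    have hProdEq : ∏ i, ((f i : 𝓞 K)) = ∏ j, ((g j : 𝓞 K)) := by
      have h1 : ((∏ i, f i : ↥O) : 𝓞 K) = ∏ i, ((f i : 𝓞 K)) := by push_cast; rfl
      have h2 : ((∏ j, g j : ↥O) : 𝓞 K) = ∏ j, ((g j : 𝓞 K)) := by push_cast; rfl
      rw [← h1, ← h2, heq]
    have hnm : n ≤ m * D := by
      have c1 : n ≤ ∑ i : Fin n, L ((f i : 𝓞 K)) := by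
        calc n = ∑ _i : Fin n, 1 := by simp
        _ ≤ ∑ i : Fin n, L ((f i : 𝓞 K)) :=
          Finset.sum_le_sum (fun i _ => (hbounds (f i) (hf i)).1)
      have c2 : ∑ j : Fin m, L ((g j : 𝓞 K)) ≤ m * D := by
        calc ∑ j : Fin m, L ((g j : 𝓞 K)) ≤ ∑ _j : Fin m, D :=
          Finset.sum_le_sum (fun j _ => (hbounds (g j) (hg j)).2)
        _ = m * D := by simp [Finset.sum_const, Finset.card_univ, mul_comm]
      have c3 : ∑ i : Fin n, L ((f i : 𝓞 K)) = ∑ j : Fin m, L ((g j : 𝓞 K)) := by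
        rw [← hLprod n _ hF0, ← hLprod m _ hG0, hProdEq]
      omega
    rcases Nat.eq_zero_or_pos m with hm | hm
    · subst hm
      have : n = 0 := by omega
      subst this
      simp
    · rw [ENNReal.div_le_iff_le_mul (Or.inl (by exact_mod_cast hm.ne')) (Or.inl (ENNReal.natCast_ne_top m))]
      calc (n : ℝ≥0∞) ≤ ((m * D : ℕ) : ℝ≥0∞) := by exact_mod_cast hnm
      _ = (D : ℝ≥0∞) * (m : ℝ≥0∞) := by push_cast; ring
  exact ne_top_of_le_ne_top (ENNReal.natCast_ne_top D) hle
end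

section
/- Let O_K be a ring of integers with class number 1, and let O ⊆ O_K be an order whose conductor is a prime ideal of O_K. Then ρ(O) ≤ max{ D(Cl(O)), D̄(O) }, where Cl(O) is the class group of the order O and D̄(O) = D_O(O_K). -/
set_option maxHeartbeats 1000000
set_option synthInstance.maxHeartbeats 400000
set_option linter.unusedSectionVars false

open NumberField BigOperators
open scoped ENNReal

/-- The Davenport constant of a (multiplicatively written) abelian group: the least `n`
such that every sequence of `n` elements has a nonempty subsequence with product `1`. -/
noncomputable def DavenportMul (G : Type*) [CommGroup G] : ℕ∞ :=
  sInf ((↑) '' {n : ℕ | ∀ f : Fin n → G,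
    ∃ S : Finset (Fin n), S.Nonempty ∧ ∏ i ∈ S, f i = 1})

namespace Stmt2Aux

variable {K : Type*} [Field K] [NumberField K] (O : Subring (𝓞 K))

lemma mem_conductor_iff {x : 𝓞 K} : x ∈ conductorIdeal O ↔ ∀ b : 𝓞 K, x * b ∈ O :=
  Iff.rfl

lemma cond_sub {a : 𝓞 K} (ha : a ∈ conductorIdeal O) : a ∈ O := by
  simpa using (mem_conductor_iff O).mp ha 1

lemma mem_of_sub_mem {x w : 𝓞 K} (hw : w ∈ O) (h : x - w ∈ conductorIdeal O) : x ∈ O := by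
  have := O.add_mem (cond_sub O h) hw
  simpa using this

lemma isUnit_val_of_isUnit {a : ↥O} (h : IsUnit a) : IsUnit (a : 𝓞 K) :=
  h.map O.subtype

/-- The conductor of a full-rank order is nonzero. -/
lemma cond_ne_bot (hO : Module.finrank ℤ ↥O = Module.finrank ℚ K) :
    conductorIdeal O ≠ ⊥ := by
  classical
  set N : Submodule ℤ (𝓞 K) := AddSubgroup.toIntSubmodule O.toAddSubgroup with hN
  have e : ↥N ≃ₗ[ℤ] ↥O :=
    { toFun := fun x => ⟨x.1, x.2⟩
      invFun := fun x => ⟨x.1, x.2⟩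
      map_add' := fun _ _ => rfl
      map_smul' := fun _ _ => rfl
      left_inv := fun _ => rfl
      right_inv := fun _ => rfl }
  have hrankN : Module.finrank ℤ ↥N = Module.finrank ℤ (𝓞 K) := by
    rw [e.finrank_eq, hO, ← NumberField.RingOfIntegers.rank]
  haveI : Module.Finite ℤ ↥N := Module.Finite.iff_fg.mpr (IsNoetherian.noetherian N)
  haveI : Module.Free ℤ ↥N := inferInstance
  have htor : ∀ x : 𝓞 K, ∃ c : ℤ, c ≠ 0 ∧ c • x ∈ N := by
    intro x
    by_contra hcon
    push_neg at hcon
    set φ : (↥N × ℤ) →ₗ[ℤ] 𝓞 K :=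
      N.subtype.coprod (LinearMap.toSpanSingleton ℤ (𝓞 K) x) with hφ
    have hinj : Function.Injective φ := by
      rw [← LinearMap.ker_eq_bot, Submodule.eq_bot_iff]
      rintro ⟨nn, cc⟩ hmem
      have hmem' : (nn : 𝓞 K) + cc • x = 0 := by
        simpa [hφ, LinearMap.mem_ker, LinearMap.coprod_apply,
          LinearMap.toSpanSingleton_apply] using hmem
      by_cases hcc : cc = 0
      · subst hcc
        simp only [zero_smul, add_zero] at hmem'
        have : nn = 0 := Subtype.ext hmem'
        simp [this]
      · exfalso
        apply hcon cc hcc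
        have : cc • x = -(nn : 𝓞 K) := by linear_combination hmem'
        rw [this]
        exact N.neg_mem nn.2
    have hle := LinearMap.finrank_le_finrank_of_injective hinj
    rw [Module.finrank_prod, hrankN, Module.finrank_self] at hle
    omega
  set B := Module.Free.chooseBasis ℤ (𝓞 K) with hB
  choose c hc0 hcm using fun i => htor (B i)
  set C : ℤ := ∏ i, c i with hC
  have hC0 : C ≠ 0 := Finset.prod_ne_zero_iff.mpr fun i _ => hc0 i
  have hCsm : ∀ y : 𝓞 K, C • y ∈ N := by
    intro y
    set M' : Submodule ℤ (𝓞 K) := N.comap ((LinearMap.lsmul ℤ (𝓞 K)) C) with hM'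
    have hBmem : ∀ i, B i ∈ M' := by
      intro i
      show C • B i ∈ N
      rw [show C = (∏ j ∈ Finset.univ.erase i, c j) * c i from
        (Finset.prod_erase_mul _ _ (Finset.mem_univ i)).symm, mul_smul]
      exact N.smul_mem _ (hcm i)
    have hy : y ∈ Submodule.span ℤ (Set.range B) := by rw [B.span_eq]; trivial
    exact Submodule.span_le.mpr (Set.range_subset_iff.mpr hBmem) hy
  intro hbot
  have hmem : (C • (1 : 𝓞 K)) ∈ conductorIdeal O := by
    rw [mem_conductor_iff]
    intro b
    rw [smul_mul_assoc, one_mul]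
    exact hCsm b
  rw [hbot, Ideal.mem_bot] at hmem
  have hC' : ((C : ℤ) : 𝓞 K) = 0 := by
    have h1 : C • (1 : 𝓞 K) = ((C : ℤ) : 𝓞 K) := by
      rw [zsmul_eq_mul, mul_one]
    rw [← h1]; exact hmem
  exact Int.cast_ne_zero.mpr hC0 hC'

variable (hprime : (conductorIdeal O).IsPrime) (hbot : conductorIdeal O ≠ ⊥)

include hprime hbot in
/-- Inverses modulo the conductor, within `O`. -/
lemma exists_inv_mod {u : 𝓞 K} (hu : u ∈ O) (hu' : u ∉ conductorIdeal O) :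
    ∃ w ∈ O, u * w - 1 ∈ conductorIdeal O := by
  classical
  haveI : (conductorIdeal O).IsMaximal := hprime.isMaximal hbot
  letI : Field ((𝓞 K) ⧸ conductorIdeal O) := Ideal.Quotient.field _
  letI : Fintype ((𝓞 K) ⧸ conductorIdeal O) := @Fintype.ofFinite _ (Ideal.finiteQuotientOfFreeOfNeBot _ hbot)
  set q : 𝓞 K →+* (𝓞 K) ⧸ conductorIdeal O := Ideal.Quotient.mk _ with hq
  set k : Subring ((𝓞 K) ⧸ conductorIdeal O) := O.map q with hk
  have hq0 : q u ≠ 0 := by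
    simpa [hq, Ideal.Quotient.eq_zero_iff_mem] using hu'
  have hqu : q u ∈ k := Subring.mem_map.mpr ⟨u, hu, rfl⟩
  set φ : ↥k → ↥k := fun x => ⟨q u * ↑x, k.mul_mem hqu x.2⟩ with hφ
  have hinj : Function.Injective φ := by
    intro x y hxy
    apply Subtype.ext
    have := congrArg Subtype.val hxy
    exact mul_left_cancel₀ hq0 this
  have hsurj : Function.Surjective φ := Finite.injective_iff_surjective.mp hinj
  obtain ⟨x, hx⟩ := hsurj ⟨1, k.one_mem⟩
  obtain ⟨w, hwO, hwx⟩ := Subring.mem_map.mp x.2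
  refine ⟨w, hwO, ?_⟩
  have h1 : q u * ↑x = 1 := congrArg Subtype.val hx
  have h2 : q (u * w) = q 1 := by
    rw [map_mul, hwx, h1, map_one]
  rwa [Ideal.Quotient.eq] at h2

include hprime hbot in
lemma isUnit_of_isUnit_val {a : ↥O} (h : IsUnit (a : 𝓞 K)) : IsUnit a := by
  obtain ⟨v, hv⟩ : ∃ v : 𝓞 K, (a : 𝓞 K) * v = 1 := ⟨↑h.unit⁻¹, h.mul_val_inv⟩
  have hnot : (a : 𝓞 K) ∉ conductorIdeal O := by
    intro hmemc
    have h1 : (1 : 𝓞 K) ∈ conductorIdeal O := by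
      rw [← hv]; exact (conductorIdeal O).mul_mem_right v hmemc
    exact hprime.ne_top ((Ideal.eq_top_iff_one _).mpr h1)
  obtain ⟨w, hw, hfw⟩ := exists_inv_mod O hprime hbot a.2 hnot
  have hbmem : w - v * ((a : 𝓞 K) * w - 1) ∈ O :=
    O.sub_mem hw (cond_sub O ((conductorIdeal O).mul_mem_left v hfw))
  refine IsUnit.of_mul_eq_one (a := a) ⟨_, hbmem⟩ ?_
  apply Subtype.ext
  show (a : 𝓞 K) * (w - v * ((a : 𝓞 K) * w - 1)) = 1
  have : (a : 𝓞 K) * (w - v * ((a : 𝓞 K) * w - 1))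
      = (a : 𝓞 K) * w - ((a : 𝓞 K) * v) * ((a : 𝓞 K) * w - 1) := by ring
  rw [this, hv]
  ring

include hprime hbot in
/-- Key lemma: an irreducible of `O` is a product of at most `N` irreducibles of `𝓞 K`,
where `N` is any integer with the Davenport-subproduct property. -/
lemma key {N : ℕ}
    (hN : ∀ f : Fin N → 𝓞 K, (∀ i, Irreducible (f i)) →
      ∃ S : Finset (Fin N), S.Nonempty ∧ (∏ i ∈ S, f i) ∈ (O : Set (𝓞 K)))
    {L : ℕ} {π : Fin L → 𝓞 K} (hπ : ∀ i, Irreducible (π i))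
    {α : ↥O} (hirr : Irreducible α) {cu : (𝓞 K)ˣ}
    (hprod : (∏ i, π i) * (cu : 𝓞 K) = (α : 𝓞 K)) : L ≤ N := by
  classical
  by_contra hcon
  push_neg at hcon
  have contra : ∀ S : Finset (Fin L), S.Nonempty → Sᶜ.Nonempty →
      (∏ i ∈ S, π i) ∈ O → ((∏ i ∈ Sᶜ, π i) * (cu : 𝓞 K)) ∈ O → False := by
    intro S hS hSc hu hv
    have hsplit : α = (⟨_, hu⟩ * ⟨_, hv⟩ : ↥O) := by
      apply Subtype.ext
      show (α : 𝓞 K) = (∏ i ∈ S, π i) * ((∏ i ∈ Sᶜ, π i) * (cu : 𝓞 K))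
      rw [← hprod, ← mul_assoc, S.prod_mul_prod_compl]
    rcases hirr.isUnit_or_isUnit hsplit with h | h
    · obtain ⟨i, hi⟩ := hS
      exact (hπ i).not_isUnit (isUnit_of_dvd_unit (Finset.dvd_prod_of_mem π hi)
        (isUnit_val_of_isUnit O h))
    · obtain ⟨i, hi⟩ := hSc
      exact (hπ i).not_isUnit (isUnit_of_dvd_unit
        (dvd_mul_of_dvd_left (Finset.dvd_prod_of_mem π hi) _)
        (isUnit_val_of_isUnit O h))
  set T : Finset (Fin L) := Finset.univ.filter (fun i => π i ∈ conductorIdeal O) with hT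
  by_cases hTcard : 2 ≤ T.card
  · obtain ⟨a, ha, b, hb, hab⟩ := Finset.one_lt_card.mp hTcard
    have hπa : π a ∈ conductorIdeal O := (Finset.mem_filter.mp ha).2
    have hπb : π b ∈ conductorIdeal O := (Finset.mem_filter.mp hb).2
    have hbmem : b ∈ ({a} : Finset (Fin L))ᶜ := by
      simp [Finset.mem_compl, Ne.symm hab]
    refine contra {a} (Finset.singleton_nonempty a) ⟨b, hbmem⟩ ?_ ?_
    · simpa using cond_sub O hπa
    · apply cond_sub O
      obtain ⟨t, ht⟩ := Finset.dvd_prod_of_mem π hbmem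
      rw [ht]
      exact (conductorIdeal O).mul_mem_right _ ((conductorIdeal O).mul_mem_right _ hπb)
  · push_neg at hTcard
    have hcardT : Tᶜ.card = L - T.card := by
      rw [Finset.card_compl, Fintype.card_fin]
    have hcompl : N ≤ Tᶜ.card := by omega
    obtain ⟨J, hJT, hJcard⟩ := Finset.exists_subset_card_eq hcompl
    set eqv : ↥J ≃ Fin N := J.equivFin.trans (finCongr hJcard) with heqv
    set f : Fin N → 𝓞 K := fun i => π ↑(eqv.symm i) with hf
    obtain ⟨S', hS'ne, hS'mem⟩ := hN f (fun i => hπ _)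
    set S : Finset (Fin L) := S'.image (fun i => (↑(eqv.symm i) : Fin L)) with hS
    have hprodS : ∏ i ∈ S, π i = ∏ i ∈ S', f i := by
      rw [hS, Finset.prod_image]
      intro i _ j _ h
      exact eqv.symm.injective (Subtype.ext h)
    have hSmem : ∀ i ∈ S, i ∈ Tᶜ := by
      intro i hi
      obtain ⟨j, _, rfl⟩ := Finset.mem_image.mp hi
      exact hJT (eqv.symm j).2
    have hu : (∏ i ∈ S, π i) ∈ O := by rw [hprodS]; exact hS'mem
    have hunot : (∏ i ∈ S, π i) ∉ conductorIdeal O := by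
      intro h
      obtain ⟨i, hi, hmem⟩ := (Ideal.IsPrime.prod_mem_iff (hp := hprime)).mp h
      have h2 := hSmem i hi
      rw [Finset.mem_compl, hT, Finset.mem_filter] at h2
      exact h2 ⟨Finset.mem_univ i, hmem⟩
    have hScne : Sᶜ.Nonempty := by
      rw [← Finset.card_pos, Finset.card_compl, Fintype.card_fin]
      have h1 : S.card ≤ N := by
        calc S.card ≤ S'.card := Finset.card_image_le
        _ ≤ N := by simpa using Finset.card_le_univ S'
      omega
    obtain ⟨w, hw, hfw⟩ := exists_inv_mod O hprime hbot hu hunot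
    set u := ∏ i ∈ S, π i with hudef
    set v := (∏ i ∈ Sᶜ, π i) * (cu : 𝓞 K) with hvdef
    have huv : u * v = (α : 𝓞 K) := by
      rw [hudef, hvdef, ← mul_assoc, S.prod_mul_prod_compl, hprod]
    have hvO : v ∈ O := by
      apply mem_of_sub_mem O (O.mul_mem α.2 hw)
      have hrw : v - (α : 𝓞 K) * w = -(v * (u * w - 1)) := by
        rw [← huv]; ring
      rw [hrw]
      exact (conductorIdeal O).neg_mem ((conductorIdeal O).mul_mem_left v hfw)
    exact contra S (hS'ne.image _) hScne hu hvO

end Stmt2Aux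

open Stmt2Aux UniqueFactorizationMonoid in
/-- Let `𝓞 K` be a ring of integers with class number 1 and `O ⊆ 𝓞 K` an
order whose conductor is a prime ideal of `𝓞 K`.  Then
`ρ(O) ≤ max { D(Cl(O)), D̄(O) }`, read in the extended reals, where `Cl(O)` is the class
group of the order `O` and `D̄(O) = D_O(𝓞 K)`. -/
theorem stmt_2 {K : Type*} [Field K] [NumberField K]
    (hK : NumberField.classNumber K = 1)
    (O : Subring (𝓞 K)) (hO : Module.finrank ℤ ↥O = Module.finrank ℚ K)
    (hprime : (conductorIdeal O).IsPrime) :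
    elasticity ↥O ≤
      max ((DavenportMul (ClassGroup ↥O) : ℝ≥0∞))
        ((DavenportSet (𝓞 K) (O : Set (𝓞 K)) : ℝ≥0∞)) := by
  classical
  have hbot : conductorIdeal O ≠ ⊥ := cond_ne_bot O hO
  set P : Set ℕ := {n : ℕ | ∀ f : Fin n → 𝓞 K, (∀ i, Irreducible (f i)) →
    ∃ S : Finset (Fin n), S.Nonempty ∧ (∏ i ∈ S, f i) ∈ (O : Set (𝓞 K))} with hP
  by_cases hne : P.Nonempty
  · set N := sInf P with hNdef
    have hNP : N ∈ P := Nat.sInf_mem hne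
    suffices hmain : elasticity ↥O ≤ (N : ℝ≥0∞) by
      refine hmain.trans (le_trans ?_ (le_max_right _ _))
      have h1 : ((N : ℕ∞)) ≤ DavenportSet (𝓞 K) (O : Set (𝓞 K)) := by
        apply le_sInf
        rintro b ⟨m, hm, rfl⟩
        exact_mod_cast Nat.sInf_le hm
      calc (N : ℝ≥0∞) = (((N : ℕ∞)) : ℝ≥0∞) := by simp
        _ ≤ _ := by exact_mod_cast h1
    haveI : IsPrincipalIdealRing (𝓞 K) := NumberField.classNumber_eq_one_iff.mp hK
    letI : NormalizationMonoid (𝓞 K) := UniqueFactorizationMonoid.normalizationMonoid.toNormalizationMonoid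
    have Hprod : ∀ (n : ℕ) (x : Fin n → 𝓞 K) (s : Finset (Fin n)), (∀ i, x i ≠ 0) →
        (normalizedFactors (∏ i ∈ s, x i)).card = ∑ i ∈ s, (normalizedFactors (x i)).card := by
      intro n x s hx
      induction s using Finset.induction_on with
      | empty => simp [normalizedFactors_one]
      | @insert a s ha ih =>
        rw [Finset.prod_insert ha,
          normalizedFactors_mul (hx a) (Finset.prod_ne_zero_iff.mpr fun i _ => hx i),
          Multiset.card_add, ih, Finset.sum_insert ha]
    have hval0 : ∀ (β : ↥O), Irreducible β → (β : 𝓞 K) ≠ 0 := by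
      intro β hβ
      simpa using hβ.ne_zero
    have hkey : ∀ (β : ↥O), Irreducible β → (normalizedFactors (β : 𝓞 K)).card ≤ N := by
      intro β hβ
      have hβ0 := hval0 β hβ
      set l := (normalizedFactors (β : 𝓞 K)).toList with hl
      have hlp : (∏ i : Fin l.length, l.get i) = (normalizedFactors (β : 𝓞 K)).prod := by
        rw [← List.prod_ofFn, List.ofFn_get, hl, Multiset.prod_toList]
      have hassoc : Associated (∏ i : Fin l.length, l.get i) (β : 𝓞 K) := by
        rw [hlp]; exact prod_normalizedFactors hβ0
      obtain ⟨cu, hcu⟩ := hassoc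
      have hirr : ∀ i : Fin l.length, Irreducible (l.get i) := by
        intro i
        exact irreducible_of_normalized_factor _
          (by rw [← Multiset.mem_toList, ← hl]; exact List.get_mem l i)
      have := key O hprime hbot hNP hirr hβ hcu
      calc (normalizedFactors (β : 𝓞 K)).card = l.length := by
            rw [hl, Multiset.length_toList]
        _ ≤ N := this
    have hpos : ∀ (β : ↥O), Irreducible β → 1 ≤ (normalizedFactors (β : 𝓞 K)).card := by
      intro β hβ
      by_contra h
      push_neg at h
      have h0 : (normalizedFactors (β : 𝓞 K)) = 0 := by
        rw [← Multiset.card_eq_zero]; omega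
      have := prod_normalizedFactors (hval0 β hβ)
      rw [h0, Multiset.prod_zero] at this
      obtain ⟨un, hun⟩ := this
      rw [one_mul] at hun
      exact hβ.not_isUnit (isUnit_of_isUnit_val O hprime hbot (hun ▸ un.isUnit))
    rw [elasticity]
    refine iSup_le fun n => iSup_le fun m => iSup_le fun f => iSup_le fun g =>
      iSup_le fun hf => iSup_le fun hg => iSup_le fun heq => ?_
    rcases Nat.eq_zero_or_pos m with hm | hm
    · subst hm
      have hg1 : (∏ j : Fin 0, g j) = 1 := by simp
      rw [hg1] at heq
      have hn : n = 0 := by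
        by_contra hn0
        have hpos : 0 < n := Nat.pos_of_ne_zero hn0
        have : IsUnit (f ⟨0, hpos⟩) :=
          isUnit_of_dvd_one (heq ▸ Finset.dvd_prod_of_mem f (Finset.mem_univ _))
        exact (hf _).not_isUnit this
      subst hn
      simp
    · have hcount : n ≤ N * m := by
        have hf0 : ∀ i, ((f i : ↥O) : 𝓞 K) ≠ 0 := fun i => hval0 _ (hf i)
        have hg0 : ∀ j, ((g j : ↥O) : 𝓞 K) ≠ 0 := fun j => hval0 _ (hg j)
        have hco : (∏ i : Fin n, ((f i : ↥O) : 𝓞 K)) = ∏ j : Fin m, ((g j : ↥O) : 𝓞 K) := by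
          have h' : ((∏ i : Fin n, f i : ↥O) : 𝓞 K) = ((∏ j : Fin m, g j : ↥O) : 𝓞 K) :=
            congrArg _ heq
          simpa using h'
        have e1 : (∑ i : Fin n, (normalizedFactors ((f i : ↥O) : 𝓞 K)).card)
            = ∑ j : Fin m, (normalizedFactors ((g j : ↥O) : 𝓞 K)).card := by
          rw [← Hprod n _ Finset.univ hf0, ← Hprod m _ Finset.univ hg0, hco]
        have hle1 : n ≤ ∑ i : Fin n, (normalizedFactors ((f i : ↥O) : 𝓞 K)).card := by
          calc n = ∑ _i : Fin n, 1 := by simp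
            _ ≤ _ := Finset.sum_le_sum fun i _ => hpos _ (hf i)
        have hle2 : (∑ j : Fin m, (normalizedFactors ((g j : ↥O) : 𝓞 K)).card)
            ≤ ∑ _j : Fin m, N := Finset.sum_le_sum fun j _ => hkey _ (hg j)
        have hle3 : (∑ _j : Fin m, N) = m * N := by
          rw [Finset.sum_const, Finset.card_univ, Fintype.card_fin, smul_eq_mul]
        calc n ≤ _ := hle1
          _ = _ := e1
          _ ≤ _ := hle2
          _ = m * N := hle3
          _ = N * m := Nat.mul_comm m N
      rw [ENNReal.div_le_iff_le_mul (Or.inl (by exact_mod_cast hm.ne'))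
        (Or.inl (ENNReal.natCast_ne_top m))]
      calc (n : ℝ≥0∞) ≤ ((N * m : ℕ) : ℝ≥0∞) := by exact_mod_cast hcount
        _ = (N : ℝ≥0∞) * (m : ℝ≥0∞) := by push_cast; ring
  · have hPempty : P = ∅ := Set.not_nonempty_iff_eq_empty.mp hne
    have hDS : DavenportSet (𝓞 K) (O : Set (𝓞 K)) = ⊤ := by
      rw [DavenportSet, show {n : ℕ | ∀ f : Fin n → 𝓞 K, (∀ i, Irreducible (f i)) →
        ∃ S : Finset (Fin n), S.Nonempty ∧ (∏ i ∈ S, f i) ∈ (O : Set (𝓞 K))} = P from rfl,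
        hPempty]
      simp
    refine le_trans le_top (le_trans ?_ (le_max_right _ _))
    rw [hDS]
    simp
end

section
/- Let ℤ[ω] be the ring of integers of a quadratic number field ℚ(√d) (d squarefree), let p be a rational prime, and suppose π₁ ∈ ℤ[pω] and π₂ ∈ ℤ[ω] \\ ℤ[pω]. Then π₁π₂ ∈ ℤ[pω] if and only if π₁ ∈ pℤ[ω]. -/
open NumberField BigOperators

private lemma aux_rep {A : Type*} [CommRing A] (z : A) (U V : ℤ)
    (hz : z ^ 2 = (U : A) + (V : A) * z) :
    ∀ x ∈ Algebra.adjoin ℤ {z}, ∃ a b : ℤ, x = (a : A) + (b : A) * z := by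
  intro x hx
  induction hx using Algebra.adjoin_induction with
  | mem y hy =>
    exact ⟨0, 1, by simp [Set.mem_singleton_iff.mp hy]⟩
  | algebraMap r => exact ⟨r, 0, by simp⟩
  | add x y hx hy ihx ihy =>
    obtain ⟨a, b, rfl⟩ := ihx
    obtain ⟨a', b', rfl⟩ := ihy
    exact ⟨a + a', b + b', by push_cast; ring⟩
  | mul x y hx hy ihx ihy =>
    obtain ⟨a, b, rfl⟩ := ihx
    obtain ⟨a', b', rfl⟩ := ihy
    refine ⟨a * a' + b * b' * U, a * b' + a' * b + b * b' * V, ?_⟩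
    push_cast
    linear_combination ((b : A) * (b' : A)) * hz

/-- Let `ℤ[ω]` be the ring of integers of a quadratic number field `ℚ(√d)`
(`d` squarefree), `p` a rational prime, `π₁ ∈ ℤ[pω]` and `π₂ ∈ ℤ[ω] \ ℤ[pω]`.
Then `π₁π₂ ∈ ℤ[pω]` if and only if `π₁ ∈ pℤ[ω]`. -/
theorem stmt_9 {K : Type*} [Field K] [NumberField K]
    (d : ℤ) (hd : Squarefree d)
    (s : K) (hs : s ^ 2 = (d : K)) (hdeg : Module.finrank ℚ K = 2)
    (ω : 𝓞 K)
    (hω : algebraMap (𝓞 K) K ω = if d % 4 = 1 then (1 + s) / 2 else s)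
    (hgen : Algebra.adjoin ℤ {ω} = ⊤)
    (p : ℕ) (hp : p.Prime)
    (π₁ π₂ : 𝓞 K)
    (h₁ : π₁ ∈ Algebra.adjoin ℤ {(p : 𝓞 K) * ω})
    (h₂ : π₂ ∉ Algebra.adjoin ℤ {(p : 𝓞 K) * ω}) :
    π₁ * π₂ ∈ Algebra.adjoin ℤ {(p : 𝓞 K) * ω} ↔ (p : 𝓞 K) ∣ π₁ := by
  have inj : Function.Injective (algebraMap (𝓞 K) K) :=
    IsFractionRing.injective (𝓞 K) K
  -- Lemma B : ω² = u + v ω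
  obtain ⟨u, v, hquad⟩ : ∃ u v : ℤ, ω ^ 2 = (u : 𝓞 K) + (v : 𝓞 K) * ω := by
    by_cases h4 : d % 4 = 1
    · obtain ⟨k, hd4⟩ : ∃ k : ℤ, d = 4 * k + 1 := ⟨(d - 1) / 4, by omega⟩
      refine ⟨k, 1, inj ?_⟩
      simp only [map_pow, map_add, map_mul, map_intCast, map_one]
      rw [hω, if_pos h4]
      have hs' : s ^ 2 = 4 * (k : K) + 1 := by
        rw [hs, hd4]; push_cast; ring
      have h2 : (2 : K) ≠ 0 := two_ne_zero
      field_simp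
      linear_combination hs'
    · refine ⟨d, 0, inj ?_⟩
      simp only [map_pow, map_add, map_mul, map_intCast, map_zero]
      rw [hω, if_neg h4]
      push_cast
      rw [hs]
      ring
  -- Lemma A : linear independence of 1 and ω over ℤ
  have linA : ∀ a b : ℤ, (a : 𝓞 K) + (b : 𝓞 K) * ω = 0 → a = 0 ∧ b = 0 := by
    intro a b h
    by_cases hb : b = 0
    · subst hb
      simp only [Int.cast_zero, zero_mul, add_zero] at h
      exact ⟨by exact_mod_cast h, rfl⟩
    · exfalso
      -- ω maps to a rational number in K
      have hbK : ((b : ℤ) : K) ≠ 0 := Int.cast_ne_zero.mpr hb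
      have hωrat : (algebraMap (𝓞 K) K) ω = algebraMap ℚ K (-a / b) := by
        have hK : ((a : ℤ) : K) + ((b : ℤ) : K) * (algebraMap (𝓞 K) K) ω = 0 := by
          have := congrArg (algebraMap (𝓞 K) K) h
          push_cast at this
          simpa using this
        rw [map_div₀, map_neg, map_intCast, map_intCast, eq_div_iff hbK]
        linear_combination hK
      -- every element of 𝓞 K maps to a rational
      have him : ∀ w : 𝓞 K, ∃ q : ℚ, algebraMap (𝓞 K) K w = algebraMap ℚ K q := by
        intro w
        have hw : w ∈ Algebra.adjoin ℤ {ω} := hgen ▸ Algebra.mem_top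
        induction hw using Algebra.adjoin_induction with
        | mem y hy =>
          rw [Set.mem_singleton_iff.mp hy]
          exact ⟨-a / b, hωrat⟩
        | algebraMap r => exact ⟨r, by simp [map_intCast]⟩
        | add x y hx hy ihx ihy =>
          obtain ⟨q, hq⟩ := ihx
          obtain ⟨q', hq'⟩ := ihy
          exact ⟨q + q', by rw [map_add, map_add, hq, hq']⟩
        | mul x y hx hy ihx ihy =>
          obtain ⟨q, hq⟩ := ihx
          obtain ⟨q', hq'⟩ := ihy
          exact ⟨q * q', by rw [map_mul, map_mul, hq, hq']⟩
      have hbot : (⊥ : Subalgebra ℚ K) = ⊤ := by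
        rw [eq_top_iff]
        intro x _
        obtain ⟨y, z, -, rfl⟩ := IsFractionRing.div_surjective (A := 𝓞 K) x
        obtain ⟨qy, hqy⟩ := him y
        obtain ⟨qz, hqz⟩ := him z
        rw [Algebra.mem_bot]
        exact ⟨qy / qz, by rw [map_div₀, hqy, hqz]⟩
      have := Subalgebra.bot_eq_top_iff_finrank_eq_one.mp hbot
      rw [hdeg] at this
      omega
  have uniq : ∀ a b a' b' : ℤ, (a : 𝓞 K) + (b : 𝓞 K) * ω = (a' : 𝓞 K) + (b' : 𝓞 K) * ω →
      a = a' ∧ b = b' := by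
    intro a b a' b' h
    have h0 : ((a - a' : ℤ) : 𝓞 K) + ((b - b' : ℤ) : 𝓞 K) * ω = 0 := by
      push_cast
      linear_combination h
    obtain ⟨h1, h2⟩ := linA _ _ h0
    omega
  -- representation of arbitrary elements
  have rep : ∀ x : 𝓞 K, ∃ a b : ℤ, x = (a : 𝓞 K) + (b : 𝓞 K) * ω := fun x =>
    aux_rep ω u v hquad x (hgen ▸ Algebra.mem_top)
  -- membership criterion for R = adjoin ℤ {pω}
  have hpω : ((p : 𝓞 K) * ω) ^ 2 = ((p ^ 2 * u : ℤ) : 𝓞 K) + ((p * v : ℤ) : 𝓞 K) * ((p : 𝓞 K) * ω) := by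
    push_cast
    linear_combination ((p : 𝓞 K))^2 * hquad
  have memR : ∀ a b : ℤ, ((a : 𝓞 K) + (b : 𝓞 K) * ω ∈ Algebra.adjoin ℤ {(p : 𝓞 K) * ω})
      ↔ (p : ℤ) ∣ b := by
    intro a b
    constructor
    · intro hmem
      obtain ⟨a', b', hab⟩ := aux_rep _ _ _ hpω _ hmem
      have : (a : 𝓞 K) + (b : 𝓞 K) * ω = ((a' : ℤ) : 𝓞 K) + ((b' * p : ℤ) : 𝓞 K) * ω := by
        rw [hab]; push_cast; ring
      obtain ⟨-, h2⟩ := uniq _ _ _ _ this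
      exact ⟨b', by rw [h2]; ring⟩
    · rintro ⟨c, rfl⟩
      have h1 : ((a : ℤ) : 𝓞 K) ∈ Algebra.adjoin ℤ {(p : 𝓞 K) * ω} :=
        Subalgebra.intCast_mem _ a
      have h2 : ((c : ℤ) : 𝓞 K) * ((p : 𝓞 K) * ω) ∈ Algebra.adjoin ℤ {(p : 𝓞 K) * ω} :=
        mul_mem (Subalgebra.intCast_mem _ c) (Algebra.subset_adjoin rfl)
      have : ((a : ℤ) : 𝓞 K) + ((c : ℤ) : 𝓞 K) * ((p : 𝓞 K) * ω)
          = (a : 𝓞 K) + (((p : ℤ) * c : ℤ) : 𝓞 K) * ω := by push_cast; ring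
      exact this ▸ add_mem h1 h2
  -- decompose π₁, π₂
  obtain ⟨c, e, hπ₂⟩ := rep π₂
  have hpe : ¬ (p : ℤ) ∣ e := fun h => h₂ (hπ₂ ▸ (memR c e).mpr h)
  obtain ⟨a, b, hπ₁⟩ := rep π₁
  have hpb : (p : ℤ) ∣ b := (memR a b).mp (hπ₁ ▸ h₁)
  -- product expansion
  have hprod : π₁ * π₂ = ((a * c + b * e * u : ℤ) : 𝓞 K)
      + ((a * e + b * c + b * e * v : ℤ) : 𝓞 K) * ω := by
    rw [hπ₁, hπ₂]
    push_cast
    linear_combination ((b : 𝓞 K) * (e : 𝓞 K)) * hquad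
  have hpZ : Prime (p : ℤ) := Int.prime_iff_natAbs_prime.mpr (by simpa using hp)
  constructor
  · intro hmem
    rw [hprod] at hmem
    have hdvd : (p : ℤ) ∣ a * e + b * c + b * e * v := (memR _ _).mp hmem
    have hpae : (p : ℤ) ∣ a * e := by
      have h' : (p:ℤ) ∣ b * c + b * e * v :=
        Dvd.dvd.add (hpb.mul_right c) ((hpb.mul_right e).mul_right v)
      have := dvd_sub hdvd h'
      convert this using 1
      · rfl
      ring
    have hpa : (p : ℤ) ∣ a := ((hpZ.dvd_mul).mp hpae).resolve_right hpe
    obtain ⟨a₀, rfl⟩ := hpa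
    obtain ⟨b₀, rfl⟩ := hpb
    refine ⟨(a₀ : 𝓞 K) + (b₀ : 𝓞 K) * ω, ?_⟩
    rw [hπ₁]; push_cast; ring
  · rintro ⟨x, hx⟩
    obtain ⟨a', b', rfl⟩ := rep x
    have : (a : 𝓞 K) + (b : 𝓞 K) * ω = (((p : ℤ) * a' : ℤ) : 𝓞 K) + (((p : ℤ) * b' : ℤ) : 𝓞 K) * ω := by
      rw [← hπ₁, hx]; push_cast; ring
    obtain ⟨ha, hb⟩ := uniq _ _ _ _ this
    have hpa : (p : ℤ) ∣ a := ⟨a', ha⟩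
    rw [hprod]
    refine (memR _ _).mpr ?_
    obtain ⟨a₀, rfl⟩ := hpa
    obtain ⟨b₀, rfl⟩ := hpb
    exact ⟨a₀ * e + b₀ * c + b₀ * e * v, by ring⟩
end

section
/- Let d < −3 be a squarefree integer such that the quadratic ring of integers ℤ[ω] of ℚ(√d) has class number 1, let p be a rational prime, and let β ∈ ℤ[pω] have prime factorization β = p^n·π₁π₂⋯π_k in ℤ[ω] with each πᵢ coprime to p. If for some fixed j the prime πⱼ lies in ℤ[pω], then in every irreducible factorization β = α₁α₂⋯α_m of β in ℤ[pω], some factor α_t is an associate of πⱼ (α_t = ±πⱼ). -/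
open NumberField BigOperators

lemma adjoin_quad {A : Type*} [CommRing A] (x : A) (c e : ℤ) (hrel : x^2 = (c:A) + (e:A)*x)
    {y : A} (hy : y ∈ Algebra.adjoin ℤ {x}) : ∃ a b : ℤ, y = (a:A) + (b:A)*x := by
  rw [Algebra.adjoin_singleton_eq_range_aeval] at hy
  obtain ⟨P, hP⟩ := hy
  set q : Polynomial ℤ := Polynomial.X^2 - (Polynomial.C e * Polynomial.X + Polynomial.C c) with hq
  have hdq : q.degree = 2 := by
    rw [hq]
    compute_degree!
  have hmq : q.Monic := by
    have : (Polynomial.C e * Polynomial.X + Polynomial.C c).degree < (Polynomial.X^2 : Polynomial ℤ).degree := by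
      apply lt_of_le_of_lt (Polynomial.degree_linear_le)
      rw [Polynomial.degree_X_pow]
      norm_num
    simpa [hq] using (Polynomial.monic_X_pow (R:=ℤ) 2).sub_of_left this
  have hdeg : (P %ₘ q).degree ≤ 1 := by
    have h := Polynomial.degree_modByMonic_lt P hmq
    rw [hdq] at h
    exact Order.le_of_lt_succ (by exact_mod_cast h)
  have hx : Polynomial.aeval x q = 0 := by
    simp only [hq, map_sub, map_add, map_mul, map_pow, Polynomial.aeval_X, Polynomial.aeval_C, map_intCast,
      algebraMap_int_eq, eq_intCast]
    linear_combination hrel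
  refine ⟨(P %ₘ q).coeff 0, (P %ₘ q).coeff 1, ?_⟩
  have hsplit := Polynomial.modByMonic_add_div P q
  have hy2 : y = Polynomial.aeval x (P %ₘ q) := by
    have : Polynomial.aeval x P = Polynomial.aeval x (P %ₘ q) := by
      conv_lhs => rw [← hsplit]
      simp [hx]
    rw [← hP]; exact this
  rw [hy2]
  conv_lhs => rw [Polynomial.eq_X_add_C_of_degree_le_one hdeg]
  simp only [map_add, map_mul, Polynomial.aeval_X, Polynomial.aeval_C, map_intCast, algebraMap_int_eq, eq_intCast]
  ring

lemma norm_form_unit (c e a b a' b' : ℤ) (hD : e^2 + 4*c ≤ -7)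
    (h1 : a*a' + c*(b*b') = 1) (h2 : a*b' + a'*b + e*(b*b') = 0) :
    b = 0 ∧ (a = 1 ∨ a = -1) := by
  have key : (a^2 + e*a*b - c*b^2) * (a'^2 + e*a'*b' - c*b'^2) =
      (a*a' + c*(b*b'))^2 + e*(a*a' + c*(b*b'))*(a*b' + a'*b + e*(b*b'))
        - c*(a*b' + a'*b + e*(b*b'))^2 := by ring
  rw [h1, h2] at key
  have key2 : (a^2 + e*a*b - c*b^2) * (a'^2 + e*a'*b' - c*b'^2) = 1 := by linear_combination key
  have hN := Int.isUnit_iff.mp (IsUnit.of_mul_eq_one _ key2)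
  have hb : b = 0 := by
    by_contra hb
    have hb1 : 1 ≤ b^2 := by
      have := Int.one_le_abs hb
      nlinarith [sq_abs b, abs_nonneg b]
    rcases hN with h | h <;> nlinarith [sq_nonneg (2*a + e*b), sq_nonneg b]
  subst hb
  refine ⟨rfl, ?_⟩
  rcases hN with h | h
  · have : a * a = 1 := by linear_combination h
    exact Int.isUnit_iff.mp (IsUnit.of_mul_eq_one _ this)
  · exfalso; nlinarith


set_option maxHeartbeats 1000000 in
/-- Let `d < −3` be squarefree with `ℤ[ω]` (the ring of integers of
`ℚ(√d)`) of class number 1, `p` a rational prime, and `β ∈ ℤ[pω]` with prime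
factorization `β = p^n·π₁⋯π_k` in `ℤ[ω]`, each `π i` coprime to `p`.  If `π j ∈ ℤ[pω]`
for some fixed `j`, then every irreducible factorization `β = α₁⋯α_m` in `ℤ[pω]`
contains a factor `α t` with `α t = ± π j`. -/
theorem stmt_10 {K : Type*} [Field K] [NumberField K]
    (d : ℤ) (hd : Squarefree d) (hd3 : d < -3)
    (s : K) (hs : s ^ 2 = (d : K)) (hdeg : Module.finrank ℚ K = 2)
    (ω : 𝓞 K)
    (hω : algebraMap (𝓞 K) K ω = if d % 4 = 1 then (1 + s) / 2 else s)
    (hgen : Algebra.adjoin ℤ {ω} = ⊤)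
    (hK : NumberField.classNumber K = 1)
    (p : ℕ) (hp : p.Prime)
    (β : 𝓞 K) (hβ : β ∈ Algebra.adjoin ℤ {(p : 𝓞 K) * ω})
    (n k : ℕ) (π : Fin k → 𝓞 K)
    (hπ : ∀ i, Prime (π i))
    (hπp : ∀ i, IsCoprime (π i) ((p : ℕ) : 𝓞 K))
    (hfact : β = (p : 𝓞 K) ^ n * ∏ i, π i)
    (j : Fin k) (hj : π j ∈ Algebra.adjoin ℤ {(p : 𝓞 K) * ω})
    (m : ℕ) (α : Fin m → ↥(Algebra.adjoin ℤ {(p : 𝓞 K) * ω}))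
    (hα : ∀ t, Irreducible (α t))
    (hαβ : ((∏ t, α t : ↥(Algebra.adjoin ℤ {(p : 𝓞 K) * ω})) : 𝓞 K) = β) :
    ∃ t, ((α t : 𝓞 K) = π j ∨ (α t : 𝓞 K) = -(π j)) := by
  have hinj : Function.Injective (algebraMap (𝓞 K) K) := NumberField.RingOfIntegers.coe_injective
  -- the quadratic relation satisfied by ω
  obtain ⟨c, e, hrel, hD⟩ : ∃ c e : ℤ, ω^2 = (c:𝓞 K) + (e:𝓞 K)*ω ∧ e^2 + 4*c ≤ -7 := by
    by_cases h4 : d % 4 = 1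
    · obtain ⟨c, hc⟩ : ∃ c, d = 4*c + 1 := ⟨d/4, by omega⟩
      refine ⟨c, 1, ?_, by omega⟩
      apply hinj
      have hdK : (d:K) = 4*(c:K)+1 := by exact_mod_cast congrArg (Int.cast : ℤ → K) hc
      simp only [map_pow, map_add, map_mul, map_intCast, map_one, hω, if_pos h4]
      linear_combination (1/4 : K)*hs + (1/4 : K)*hdK
    · refine ⟨d, 0, ?_, by omega⟩
      apply hinj
      simp only [map_pow, map_add, map_mul, map_intCast, Int.cast_zero, map_zero, hω, if_neg h4]
      rw [hs]; ring
  -- linear independence of 1, ω over ℤ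
  have hli : ∀ a b : ℤ, (a:𝓞 K) + (b:𝓞 K)*ω = 0 → a = 0 ∧ b = 0 := by
    intro a b hab
    have habK : (a:K) + (b:K) * (algebraMap (𝓞 K) K ω) = 0 := by
      have := congrArg (algebraMap (𝓞 K) K) hab
      simpa using this
    have hb : b = 0 := by
      by_contra hb
      by_cases h4 : d % 4 = 1
      · rw [hω, if_pos h4] at habK
        have habK2 : 2*(a:K) + (b:K) + (b:K)*s = 0 := by linear_combination 2*habK
        have hKeq : (d:K) * (b:K)^2 = ((2*a+b : ℤ):K)^2 := by
          push_cast
          linear_combination (-(b:K)^2) * hs + ((b:K)*s - (2*(a:K)+(b:K))) * habK2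
        have hZ : d * b^2 = (2*a+b)^2 := by exact_mod_cast hKeq
        nlinarith [sq_nonneg (2*a+b), Int.one_le_abs hb, sq_abs b, abs_nonneg b]
      · rw [hω, if_neg h4] at habK
        have hKeq : (d:K) * (b:K)^2 = ((a : ℤ):K)^2 := by
          push_cast
          linear_combination (-(b:K)^2) * hs + ((b:K)*s - (a:K)) * habK
        have hZ : d * b^2 = a^2 := by exact_mod_cast hKeq
        nlinarith [sq_nonneg a, Int.one_le_abs hb, sq_abs b, abs_nonneg b]
    subst hb
    refine ⟨?_, rfl⟩
    simp only [Int.cast_zero, zero_mul, add_zero] at habK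
    exact_mod_cast habK
  -- relation for p*ω
  have prel : ((p:𝓞 K)*ω)^2 = (((p:ℤ)^2*c : ℤ):𝓞 K) + (((p:ℤ)*e : ℤ):𝓞 K)*((p:𝓞 K)*ω) := by
    push_cast
    linear_combination ((p:𝓞 K)^2)*hrel
  -- p is not a unit
  have hpnu : ¬ IsUnit ((p:ℕ) : 𝓞 K) := by
    intro h
    obtain ⟨v, hv⟩ := h.exists_right_inv
    obtain ⟨av, bv, hvc⟩ := adjoin_quad ω c e hrel (show v ∈ Algebra.adjoin ℤ {ω} by rw [hgen]; trivial)
    have h0 : (((p:ℤ)*av - 1 : ℤ) : 𝓞 K) + (((p:ℤ)*bv : ℤ):𝓞 K)*ω = 0 := by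
      push_cast
      rw [hvc] at hv
      linear_combination hv
    obtain ⟨h1, -⟩ := hli _ _ h0
    have h2 : (p:ℤ) * av = 1 := by linarith
    have := Int.eq_one_of_mul_eq_one_right (by positivity) h2
    have := hp.one_lt
    omega
  -- find the factor divisible by π j
  have hprod : ∏ t, (α t : 𝓞 K) = β := by
    rw [← hαβ]
    exact (map_prod (Subalgebra.val _) α Finset.univ).symm
  have hπβ : π j ∣ β := by
    rw [hfact]
    exact Dvd.dvd.mul_left (Finset.dvd_prod_of_mem π (Finset.mem_univ j)) _
  have hdvd : π j ∣ ∏ t, (α t : 𝓞 K) := by rw [hprod]; exact hπβ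
  obtain ⟨t, -, htdvd⟩ := (hπ j).exists_mem_finset_dvd hdvd
  obtain ⟨γ, hγ⟩ := htdvd
  -- coordinates
  obtain ⟨A, B, hπc⟩ := adjoin_quad _ _ _ prel hj
  obtain ⟨A', B', hαc⟩ := adjoin_quad _ _ _ prel (α t).2
  obtain ⟨a, b, hγc⟩ := adjoin_quad ω c e hrel (show γ ∈ Algebra.adjoin ℤ {ω} by rw [hgen]; trivial)
  have heq : (A':𝓞 K) + (B':𝓞 K)*((p:𝓞 K)*ω) = ((A:𝓞 K)+(B:𝓞 K)*((p:𝓞 K)*ω)) * ((a:𝓞 K)+(b:𝓞 K)*ω) := by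
    rw [← hαc, hγ, hπc, hγc]
  have hcoeff := hli (A' - (A*a + B*(p:ℤ)*b*c)) (B'*(p:ℤ) - (A*b + B*(p:ℤ)*a + B*(p:ℤ)*b*e))
    (by push_cast; linear_combination heq + ((B:𝓞 K)*(p:𝓞 K)*(b:𝓞 K))*hrel)
  have hpA : ¬ ((p:ℤ) ∣ A) := by
    rintro ⟨A0, hA0⟩
    apply hpnu
    refine (hπp j).isUnit_of_dvd' ?_ dvd_rfl
    exact ⟨(A0:𝓞 K) + (B:𝓞 K)*ω, by rw [hπc, hA0]; push_cast; ring⟩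
  have hpb : (p:ℤ) ∣ b := by
    have hpprime : Prime (p:ℤ) := Nat.prime_iff_prime_int.mp hp
    have hAb : (p:ℤ) ∣ A * b := ⟨B' - (B*a + B*b*e), by linear_combination - hcoeff.2⟩
    rcases hpprime.dvd_mul.mp hAb with h | h
    · exact absurd h hpA
    · exact h
  obtain ⟨b0, hb0⟩ := hpb
  have hγR : γ ∈ Algebra.adjoin ℤ {(p:𝓞 K)*ω} := by
    have hγ2 : γ = ((a:ℤ):𝓞 K) + ((b0:ℤ):𝓞 K)*((p:𝓞 K)*ω) := by
      rw [hγc, hb0]; push_cast; ring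
    rw [hγ2]
    exact add_mem (intCast_mem _ a) (mul_mem (intCast_mem _ b0) (Algebra.subset_adjoin rfl))
  have hfac : α t = (⟨π j, hj⟩ : Algebra.adjoin ℤ {(p:𝓞 K)*ω}) * ⟨γ, hγR⟩ :=
    Subtype.ext (by simpa using hγ)
  rcases (hα t).isUnit_or_isUnit hfac with hu | hu
  · exact absurd (hu.map (Subalgebra.val _)) (hπ j).not_unit
  · obtain ⟨v, hv⟩ := hu.exists_right_inv
    have hvO : γ * (v : 𝓞 K) = 1 := by
      have := congrArg (Subalgebra.val _) hv
      simpa using this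
    obtain ⟨a', b', hvc⟩ := adjoin_quad ω c e hrel
      (show (v : 𝓞 K) ∈ Algebra.adjoin ℤ {ω} by rw [hgen]; trivial)
    rw [hγc, hvc] at hvO
    have hcoeff2 := hli (a*a' + c*(b*b') - 1) (a*b' + a'*b + e*(b*b'))
      (by push_cast; linear_combination hvO - ((b:𝓞 K)*(b':𝓞 K))*hrel)
    obtain ⟨hb0', hau⟩ := norm_form_unit c e a b a' b' hD (by linarith [hcoeff2.1]) hcoeff2.2
    refine ⟨t, ?_⟩
    rcases hau with ha | ha
    · left
      have : γ = 1 := by rw [hγc, hb0', ha]; simp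
      rw [hγ, this, mul_one]
    · right
      have : γ = -1 := by rw [hγc, hb0', ha]; simp
      rw [hγ, this, mul_neg_one]
end

section
/- In the Gaussian integers ℤ[i], the element (2+i)^n does not lie in the ideal 5ℤ[i] for any n ≥ 1; consequently the generalized Davenport constant D_{5ℤ[i]}(ℤ[i]) is infinite, i.e., for every N there is a product of N irreducible elements of ℤ[i] with no nonempty subproduct lying in 5ℤ[i]. -/
open BigOperators

/-- The ring hom `ℤ[i] → ZMod 5` sending `i ↦ 2`. -/
noncomputable def phi5 : GaussianInt →+* ZMod 5 :=
  Zsqrtd.lift ⟨2, by decide⟩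

lemma phi5_apply (z : GaussianInt) : phi5 z = (z.re : ZMod 5) + (z.im : ZMod 5) * 2 := by
  simp [phi5, Zsqrtd.lift]

lemma phi5_ker (z : GaussianInt) (hz : z ∈ Ideal.span {(5 : GaussianInt)}) : phi5 z = 0 := by
  rw [Ideal.mem_span_singleton] at hz
  obtain ⟨w, rfl⟩ := hz
  rw [map_mul]
  have : phi5 (5 : GaussianInt) = 0 := by
    rw [show ((5 : GaussianInt)) = ((5 : ℤ) : GaussianInt) by push_cast; ring]
    simp only [phi5, Zsqrtd.lift, map_intCast]
    decide
  rw [this, zero_mul]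

lemma irr21 : Irreducible (⟨2, 1⟩ : GaussianInt) := by
  constructor
  · rw [← Zsqrtd.norm_eq_one_iff]
    decide
  · intro a b hab
    have hn : a.norm * b.norm = 5 := by
      rw [← Zsqrtd.norm_mul, ← hab]; decide
    have ha : 0 ≤ a.norm := Zsqrtd.norm_nonneg (by norm_num) a
    have hb : 0 ≤ b.norm := Zsqrtd.norm_nonneg (by norm_num) b
    have h5 : Prime (5 : ℤ) := by norm_num
    rcases h5.dvd_mul.mp (dvd_of_eq hn.symm) with h | h
    · right
      rw [← Zsqrtd.norm_eq_one_iff' (by norm_num : (-1 : ℤ) ≤ 0)]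
      obtain ⟨k, hk⟩ := h
      have h1 : (5 : ℤ) * (k * b.norm) = 5 * 1 := by rw [← mul_assoc, ← hk, hn, mul_one]
      have h2 : k * b.norm = 1 := mul_left_cancel₀ (by norm_num) h1
      exact Int.eq_one_of_dvd_one hb ⟨k, by linarith⟩
    · left
      rw [← Zsqrtd.norm_eq_one_iff' (by norm_num : (-1 : ℤ) ≤ 0)]
      obtain ⟨k, hk⟩ := h
      have h1 : (5 : ℤ) * (k * a.norm) = 5 * 1 := by
        rw [← mul_assoc, ← hk, mul_comm b.norm a.norm, hn, mul_one]
      have h2 : k * a.norm = 1 := mul_left_cancel₀ (by norm_num) h1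
      exact Int.eq_one_of_dvd_one ha ⟨k, by linarith⟩

lemma four_ne : (4 : ZMod 5) ≠ 0 := by decide

lemma pow_not_mem (n : ℕ) (hn : 1 ≤ n) :
    (⟨2, 1⟩ : GaussianInt) ^ n ∉ Ideal.span {(5 : GaussianInt)} := by
  haveI : Fact (Nat.Prime 5) := ⟨by norm_num⟩
  intro h
  have h4 := phi5_ker _ h
  rw [map_pow, phi5_apply] at h4
  norm_num at h4
  exact four_ne h4.1

/-- In the Gaussian integers `ℤ[i]`, the element `(2+i)^n` does not lie in
the ideal `5ℤ[i]` for any `n ≥ 1`; consequently `D_{5ℤ[i]}(ℤ[i]) = ∞`: for every `N`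
there is a product of `N` irreducibles of `ℤ[i]` with no nonempty subproduct lying in
`5ℤ[i]`. -/
theorem stmt_14 :
    (∀ n : ℕ, 1 ≤ n → (⟨2, 1⟩ : GaussianInt) ^ n ∉ Ideal.span {(5 : GaussianInt)}) ∧
    DavenportSet GaussianInt (Ideal.span {(5 : GaussianInt)} : Set GaussianInt) = ⊤ ∧
    ∀ N : ℕ, ∃ f : Fin N → GaussianInt, (∀ i, Irreducible (f i)) ∧
      ¬ ∃ S : Finset (Fin N), S.Nonempty ∧
        (∏ i ∈ S, f i) ∈ Ideal.span {(5 : GaussianInt)} := by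
  have key : ∀ N : ℕ, ∃ f : Fin N → GaussianInt, (∀ i, Irreducible (f i)) ∧
      ¬ ∃ S : Finset (Fin N), S.Nonempty ∧
        (∏ i ∈ S, f i) ∈ Ideal.span {(5 : GaussianInt)} := by
    intro N
    refine ⟨fun _ => ⟨2, 1⟩, fun _ => irr21, ?_⟩
    rintro ⟨S, hS, hmem⟩
    rw [Finset.prod_const] at hmem
    exact pow_not_mem S.card (Finset.card_pos.mpr hS) hmem
  refine ⟨pow_not_mem, ?_, key⟩
  rw [DavenportSet]
  refine (congrArg sInf (?_ : _ = (∅ : Set ℕ∞))).trans sInf_empty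
  rw [Set.image_eq_empty, Set.eq_empty_iff_forall_notMem]
  intro n hn
  obtain ⟨f, hf, hnf⟩ := key n
  exact hnf (hn f hf)
end

section
/- The elasticity of the order ℤ[5i] of ℚ(i) is infinite: ρ(ℤ[5i]) = ∞. In particular, for every n ≥ 1 the elements 5(2−i)^n and 5(2+i)^n are irreducible in ℤ[5i], and the equality (5(2−i)^n)·(5(2+i)^n) = 5^{n+2} gives irreducible factorizations in ℤ[5i] of lengths 2 and n + 2, so ρ(ℤ[5i]) ≥ (n+2)/2 for all n. -/
open BigOperators
open scoped ENNReal

/-- The order `{a + pbω : a, b ∈ ℤ}` inside `ℤ[ω] = Zsqrtd d`, realized as the subring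
of elements whose `ω`-coefficient is divisible by `p`. -/
def imDvd (d p : ℤ) : Subring (Zsqrtd d) where
  carrier := {z : Zsqrtd d | p ∣ z.im}
  mul_mem' := by
    intro a b ha hb
    simpa [Zsqrtd.im_mul] using dvd_add (Dvd.dvd.mul_left hb a.re) (Dvd.dvd.mul_right ha b.re)
  one_mem' := by simp [Zsqrtd.im_one]
  add_mem' := by
    intro a b ha hb
    simpa [Zsqrtd.im_add] using dvd_add ha hb
  zero_mem' := by simp [Zsqrtd.im_zero]
  neg_mem' := by
    intro a ha
    simpa [Zsqrtd.im_neg] using ha.neg_right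

namespace S16

def φ : GaussianInt →+* ZMod 5 := Zsqrtd.lift ⟨3, by decide⟩
def ψ : GaussianInt →+* ZMod 5 := Zsqrtd.lift ⟨2, by decide⟩

lemma φ_apply (z : GaussianInt) : φ z = (z.re : ZMod 5) + z.im * 3 := by
  simp [φ, Zsqrtd.lift_apply_apply]

lemma ψ_apply (z : GaussianInt) : ψ z = (z.re : ZMod 5) + z.im * 2 := by
  simp [ψ, Zsqrtd.lift_apply_apply]

lemma int_cast_five (t : ℤ) : (5:ℤ) ∣ t ↔ (t : ZMod 5) = 0 := by
  rw [ZMod.intCast_zmod_eq_zero_iff_dvd]; norm_num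

lemma mem_iff (z : GaussianInt) : z ∈ imDvd (-1) 5 ↔ φ z = ψ z := by
  have : z ∈ imDvd (-1) 5 ↔ (5:ℤ) ∣ z.im := Iff.rfl
  rw [this, int_cast_five, φ_apply, ψ_apply]
  constructor
  · intro h; rw [h]; ring
  · intro h
    have : (z.im : ZMod 5) * 3 - z.im * 2 = 0 := by
      have := sub_eq_zero.mpr h; linear_combination this
    have : (z.im : ZMod 5) = 0 := by linear_combination this
    exact this

lemma dvd_of (z : GaussianInt) (h1 : φ z = 0) (h2 : ψ z = 0) : (5 : GaussianInt) ∣ z := by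
  rw [φ_apply] at h1; rw [ψ_apply] at h2
  have him : (z.im : ZMod 5) = 0 := by linear_combination h1 - h2
  have hre : (z.re : ZMod 5) = 0 := by linear_combination h1 - 3 * him
  obtain ⟨a, ha⟩ := (int_cast_five _).mpr hre
  obtain ⟨b, hb⟩ := (int_cast_five _).mpr him
  exact ⟨⟨a, b⟩, by ext <;> simp [ha, hb, Zsqrtd.re_mul, Zsqrtd.im_mul]⟩

end S16

namespace S16

instance : Fact (Nat.Prime 5) := ⟨by norm_num⟩


lemma unit_of_val_unit (w : ↥(imDvd (-1) 5)) (h : IsUnit (w : GaussianInt)) : IsUnit w := by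
  have hn : (w : GaussianInt).norm = 1 := (Zsqrtd.norm_eq_one_iff' (by norm_num) _).mpr h
  have him : (5:ℤ) ∣ (w : GaussianInt).im := w.2
  rw [Zsqrtd.norm_def] at hn
  obtain ⟨b, hb⟩ := him
  have hb0 : b = 0 := by nlinarith
  have him0 : (w : GaussianInt).im = 0 := by omega
  have hre : (w : GaussianInt).re = 1 ∨ (w : GaussianInt).re = -1 := by
    have : (w : GaussianInt).re * (w : GaussianInt).re = 1 := by
      rw [him0] at hn; linarith
    rcases Int.isUnit_iff.mp (IsUnit.of_mul_eq_one _ this) with h | h <;> simp [h]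
  rcases hre with h | h
  · have : w = 1 := Subtype.ext (by ext <;> simp [h, him0])
    rw [this]; exact isUnit_one
  · have : w = -1 := Subtype.ext (by ext <;> simp [h, him0])
    rw [this]; exact isUnit_one.neg

set_option synthInstance.maxHeartbeats 1000000 in
lemma prime_of_norm_five (c : GaussianInt) (hc : c.norm = 5) : Prime c := by
  rw [← irreducible_iff_prime]
  constructor
  · intro h
    have := (Zsqrtd.norm_eq_one_iff' (by norm_num) c).mpr h
    omega
  · intro a b hab
    have h5 : a.norm.natAbs * b.norm.natAbs = 5 := by
      rw [← Int.natAbs_mul, ← Zsqrtd.norm_mul, ← hab, hc]; rfl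
    have hd : a.norm.natAbs ∣ 5 := ⟨b.norm.natAbs, h5.symm⟩
    rcases (Nat.Prime.eq_one_or_self_of_dvd (by norm_num) _ hd) with h | h
    · left; exact Zsqrtd.norm_eq_one_iff.mp h
    · right
      refine Zsqrtd.norm_eq_one_iff.mp ?_
      rw [h] at h5
      omega

lemma phi5 : φ 5 = 0 := by rw [show ((5:GaussianInt)) = ((5:ℤ) : GaussianInt) by norm_num, map_intCast]; decide
lemma psi5 : ψ 5 = 0 := by rw [show ((5:GaussianInt)) = ((5:ℤ) : GaussianInt) by norm_num, map_intCast]; decide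

lemma key (Φ Ψ : GaussianInt →+* ZMod 5)
    (hmem : ∀ z : GaussianInt, z ∈ imDvd (-1) 5 ↔ Φ z = Ψ z)
    (hΦ5 : Φ 5 = 0)
    (hdvd : ∀ z : GaussianInt, Φ z = 0 → Ψ z = 0 → (5 : GaussianInt) ∣ z)
    (c : GaussianInt) (hc : Prime c) (hΨc : Ψ c = 0) (hΦc : Φ c ≠ 0)
    (n : ℕ) (hm : (5 : GaussianInt) * c ^ n ∈ imDvd (-1) 5) :
    Irreducible (⟨(5 : GaussianInt) * c ^ n, hm⟩ : ↥(imDvd (-1) 5)) := by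
  have h5ne : (5 : GaussianInt) ≠ 0 := by
    intro h
    have := congrArg Zsqrtd.re h
    norm_num at this
  have hΦe : Φ (5 * c ^ n) = 0 := by rw [map_mul, hΦ5, zero_mul]
  constructor
  · intro h
    have h1 : IsUnit ((5 : GaussianInt) * c ^ n) := h.map (imDvd (-1) 5).subtype
    have h2 : IsUnit (Φ (5 * c ^ n)) := h1.map Φ
    rw [hΦe] at h2
    exact not_isUnit_zero h2
  · rintro ⟨x, hx⟩ ⟨y, hy⟩ hxy
    have hval : (5 : GaussianInt) * c ^ n = x * y := congrArg Subtype.val hxy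
    have main : ∀ (a b : GaussianInt) (ha : a ∈ imDvd (-1) 5) (hb : b ∈ imDvd (-1) 5),
        (5 : GaussianInt) * c ^ n = a * b → Φ a = 0 →
        IsUnit (⟨b, hb⟩ : ↥(imDvd (-1) 5)) := by
      intro a b ha hb heq hΦa
      have hΨa : Ψ a = 0 := by rw [← (hmem a).mp ha]; exact hΦa
      obtain ⟨a', ha'⟩ := hdvd a hΦa hΨa
      rw [ha', mul_assoc] at heq
      have hcn : c ^ n = a' * b := mul_left_cancel₀ h5ne heq
      have hΦb : Φ b ≠ 0 := by
        intro hΦb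
        have hΨb : Ψ b = 0 := by rw [← (hmem b).mp hb]; exact hΦb
        obtain ⟨b', hb'⟩ := hdvd b hΦb hΨb
        have : (Φ c) ^ n = 0 := by
          rw [← map_pow, hcn, hb', map_mul, map_mul, hΦ5]; ring
        exact pow_ne_zero n hΦc this
      have hbdvd : b ∣ c ^ n := ⟨a', by rw [hcn, mul_comm]⟩
      obtain ⟨k, hkn, u, hu⟩ := (dvd_prime_pow hc n).mp hbdvd
      rcases Nat.eq_zero_or_pos k with hk | hk
      · subst hk
        rw [pow_zero] at hu
        exact unit_of_val_unit _ (IsUnit.of_mul_eq_one _ hu)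
      · exfalso
        have hΨb : Ψ b = 0 := by
          have h1 : Ψ b * Ψ (u : GaussianInt) = (Ψ c) ^ k := by
            rw [← map_pow, ← hu, map_mul]
          rw [hΨc, zero_pow (by omega)] at h1
          have hu' : Ψ (u : GaussianInt) ≠ 0 := (u.isUnit.map Ψ).ne_zero
          exact (mul_eq_zero.mp h1).resolve_right hu'
        have : Φ b = 0 := by rw [(hmem b).mp hb]; exact hΨb
        exact hΦb this
    have h0 : Φ x * Φ y = 0 := by rw [← map_mul, ← hval, hΦe]
    rcases mul_eq_zero.mp h0 with h | h
    · right; exact main x y hx hy hval h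
    · left; exact main y x hy hx (by rw [hval, mul_comm]) h

end S16

namespace S16

lemma le_elast {α : Type*} [CommMonoidWithZero α] (n m : ℕ) (f : Fin n → α) (g : Fin m → α)
    (hf : ∀ i, Irreducible (f i)) (hg : ∀ j, Irreducible (g j))
    (h : ∏ i, f i = ∏ j, g j) : (n : ℝ≥0∞) / (m : ℝ≥0∞) ≤ elasticity α :=
  le_iSup_of_le n <| le_iSup_of_le m <| le_iSup_of_le f <| le_iSup_of_le g <|
    le_iSup_of_le hf <| le_iSup_of_le hg <| le_iSup_of_le h le_rfl

def c₁ : GaussianInt := ⟨2, -1⟩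
def c₂ : GaussianInt := ⟨2, 1⟩

lemma phic1 : φ c₁ = 4 := by rw [φ_apply]; decide
lemma psic1 : ψ c₁ = 0 := by rw [ψ_apply]; decide
lemma phic2 : φ c₂ = 0 := by rw [φ_apply]; decide
lemma psic2 : ψ c₂ = 4 := by rw [ψ_apply]; decide

lemma prime_c₁ : Prime c₁ := prime_of_norm_five _ (by decide)
lemma prime_c₂ : Prime c₂ := prime_of_norm_five _ (by decide)

lemma mem5cn (c : GaussianInt) (hc : ψ c = 0 ∨ φ c = 0) (n : ℕ) :
    (5 : GaussianInt) * c ^ n ∈ imDvd (-1) 5 := by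
  rw [mem_iff, map_mul, map_mul, map_pow, map_pow, phi5, psi5, zero_mul, zero_mul]

lemma irr_c₁ (n : ℕ) (hm : (5 : GaussianInt) * c₁ ^ n ∈ imDvd (-1) 5) :
    Irreducible (⟨(5 : GaussianInt) * c₁ ^ n, hm⟩ : ↥(imDvd (-1) 5)) :=
  key φ ψ mem_iff phi5 dvd_of c₁ prime_c₁ psic1 (by rw [phic1]; decide) n hm

lemma irr_c₂ (n : ℕ) (hm : (5 : GaussianInt) * c₂ ^ n ∈ imDvd (-1) 5) :
    Irreducible (⟨(5 : GaussianInt) * c₂ ^ n, hm⟩ : ↥(imDvd (-1) 5)) :=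
  key ψ φ (fun z => (mem_iff z).trans eq_comm) psi5 (fun z h1 h2 => dvd_of z h2 h1)
    c₂ prime_c₂ phic2 (by rw [psic2]; decide) n hm

lemma mem5 : (5 : GaussianInt) ∈ imDvd (-1) 5 := by
  have := mem5cn c₁ (Or.inl psic1) 0
  simpa using this

lemma irr5 : Irreducible (⟨(5 : GaussianInt), mem5⟩ : ↥(imDvd (-1) 5)) := by
  have h := irr_c₁ 0 (mem5cn c₁ (Or.inl psic1) 0)
  have e : (⟨(5 : GaussianInt) * c₁ ^ 0, mem5cn c₁ (Or.inl psic1) 0⟩ : ↥(imDvd (-1) 5))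
      = ⟨5, mem5⟩ := Subtype.ext (by simp)
  rwa [e] at h

lemma c1c2 : c₁ * c₂ = 5 := by
  ext <;> simp [c₁, c₂, Zsqrtd.re_mul, Zsqrtd.im_mul] <;> decide

lemma prod_eq (n : ℕ) :
    ((5 : GaussianInt) * c₁ ^ n) * ((5 : GaussianInt) * c₂ ^ n) = 5 ^ (n + 2) := by
  calc ((5 : GaussianInt) * c₁ ^ n) * (5 * c₂ ^ n) = (c₁ * c₂) ^ n * (5 * 5) := by
        rw [mul_pow]; ring
    _ = 5 ^ (n + 2) := by rw [c1c2, pow_add]; ring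

lemma bound (n : ℕ) : ((n : ℝ≥0∞) + 2) / 2 ≤ elasticity ↥(imDvd (-1) 5) := by
  set x : ↥(imDvd (-1) 5) := ⟨(5 : GaussianInt) * c₁ ^ n, mem5cn c₁ (Or.inl psic1) n⟩
  set y : ↥(imDvd (-1) 5) := ⟨(5 : GaussianInt) * c₂ ^ n, mem5cn c₂ (Or.inr phic2) n⟩
  have hprod : (∏ _j : Fin (n + 2), (⟨5, mem5⟩ : ↥(imDvd (-1) 5))) = ∏ i, ![x, y] i := by
    rw [Fin.prod_univ_two, Finset.prod_const]
    apply Subtype.ext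
    push_cast
    rw [Finset.card_univ, Fintype.card_fin]
    exact (prod_eq n).symm
  have := le_elast (n + 2) 2 (fun _ => (⟨5, mem5⟩ : ↥(imDvd (-1) 5))) ![x, y]
    (fun _ => irr5) (fun i => by fin_cases i <;> [exact irr_c₁ n _; exact irr_c₂ n _]) hprod
  calc ((n : ℝ≥0∞) + 2) / 2 = ((n + 2 : ℕ) : ℝ≥0∞) / ((2 : ℕ) : ℝ≥0∞) := by push_cast; ring_nf
    _ ≤ _ := this

end S16


/-- The elasticity of the order `ℤ[5i] = {a + 5bi}` of `ℚ(i)` is infinite.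
In particular, for every `n ≥ 1` the elements `5(2−i)^n` and `5(2+i)^n` are irreducible
in `ℤ[5i]`, and `(5(2−i)^n)·(5(2+i)^n) = 5^{n+2}` gives irreducible factorizations of
lengths `2` and `n + 2`, so `ρ(ℤ[5i]) ≥ (n+2)/2` for all `n`. -/
theorem stmt_16 :
    elasticity ↥(imDvd (-1) 5) = ⊤ ∧
    ∀ n : ℕ, 1 ≤ n →
      ∃ (h₁ : (5 : GaussianInt) * (⟨2, -1⟩ : GaussianInt) ^ n ∈ imDvd (-1) 5)
        (h₂ : (5 : GaussianInt) * (⟨2, 1⟩ : GaussianInt) ^ n ∈ imDvd (-1) 5),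
        Irreducible (⟨(5 : GaussianInt) * (⟨2, -1⟩ : GaussianInt) ^ n, h₁⟩ :
          ↥(imDvd (-1) 5)) ∧
        Irreducible (⟨(5 : GaussianInt) * (⟨2, 1⟩ : GaussianInt) ^ n, h₂⟩ :
          ↥(imDvd (-1) 5)) ∧
        ((5 : GaussianInt) * (⟨2, -1⟩ : GaussianInt) ^ n) *
            ((5 : GaussianInt) * (⟨2, 1⟩ : GaussianInt) ^ n) = 5 ^ (n + 2) ∧
        ((n : ℝ≥0∞) + 2) / 2 ≤ elasticity ↥(imDvd (-1) 5) := by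
  constructor
  · refine top_unique ?_
    rw [← ENNReal.iSup_natCast]
    refine iSup_le fun n => ?_
    have h := S16.bound (2 * n)
    have e : (((2 * n : ℕ) : ℝ≥0∞) + 2) / 2 = (n : ℝ≥0∞) + 1 := by
      push_cast
      rw [show (2 * (n : ℝ≥0∞) + 2) = 2 * ((n : ℝ≥0∞) + 1) by ring]
      rw [mul_comm, mul_div_assoc, ENNReal.div_self (by norm_num) (by norm_num), mul_one]
    rw [e] at h
    exact le_trans (le_add_of_nonneg_right zero_le) h
  · intro n _
    exact ⟨S16.mem5cn S16.c₁ (Or.inl S16.psic1) n, S16.mem5cn S16.c₂ (Or.inr S16.phic2) n,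
      S16.irr_c₁ n _, S16.irr_c₂ n _, S16.prod_eq n, S16.bound n⟩
end

section
/- Let O ⊆ R be an integral extension of atomic domains with R a unique factorization domain and U(R) = U(O). Let x ∈ O be a nonzero nonunit with prime factorization x = p₁p₂⋯p_n in R, and suppose x = π₁π₂⋯π_k with each πᵢ irreducible in O. Then there exist a partition of {1,…,n} into nonempty sets A₁, …, A_k and units u₁, …, u_k of R with u₁⋯u_k = 1 such that πᵢ = uᵢ·∏_{j∈Aᵢ} p_j for each i. -/
open BigOperators

lemma stmt18_div {R : Type*} [CommRing R] [IsDomain R] {ι : Type*} [DecidableEq ι]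
    (p : ι → R) (hp : ∀ i, Prime (p i)) (s : Finset ι) :
    ∀ a : R, a ≠ 0 → a ∣ ∏ j ∈ s, p j →
      ∃ (A : Finset ι) (u : Rˣ), A ⊆ s ∧ a = u * ∏ j ∈ A, p j := by
  induction s using Finset.induction_on with
  | empty =>
    intro a ha hd
    simp only [Finset.prod_empty] at hd
    obtain ⟨u, hu⟩ := isUnit_of_dvd_one hd
    exact ⟨∅, u, Finset.Subset.refl _, by simp [hu]⟩
  | insert j s hj ih =>
    intro a ha hd
    rw [Finset.prod_insert hj] at hd
    by_cases hpj : p j ∣ a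
    · obtain ⟨b, hb⟩ := hpj
      have hb0 : b ≠ 0 := by rintro rfl; simp at hb; exact ha (by simp [hb])
      have hbd : b ∣ ∏ x ∈ s, p x := by
        rw [hb] at hd
        exact (mul_dvd_mul_iff_left (hp j).ne_zero).mp hd
      obtain ⟨A, u, hAs, hbe⟩ := ih b hb0 hbd
      have hjA : j ∉ A := fun h => hj (hAs h)
      refine ⟨insert j A, u, Finset.insert_subset_insert _ hAs, ?_⟩
      rw [Finset.prod_insert hjA, hb, hbe]; ring
    · obtain ⟨c, hc⟩ := hd
      have hpc : p j ∣ c := by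
        rcases (hp j).2.2 a c ⟨∏ x ∈ s, p x, hc.symm⟩ with h | h
        · exact absurd h hpj
        · exact h
      obtain ⟨c', rfl⟩ := hpc
      have : ∏ x ∈ s, p x = a * c' :=
        mul_left_cancel₀ (hp j).ne_zero (by rw [hc]; ring)
      obtain ⟨A, u, hAs, he⟩ := ih a ha ⟨c', this⟩
      exact ⟨A, u, hAs.trans (Finset.subset_insert _ _), he⟩

lemma stmt18_part {R : Type*} [CommRing R] [IsDomain R] {ι : Type*} [DecidableEq ι]
    (p : ι → R) (hp : ∀ i, Prime (p i)) :
    ∀ (k : ℕ) (π : Fin k → R), (∀ i, π i ≠ 0) → (∀ i, ¬ IsUnit (π i)) →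
    ∀ (s : Finset ι) (c : Rˣ), (∏ i, π i) = c * ∏ j ∈ s, p j →
    ∃ (A : Fin k → Finset ι) (u : Fin k → Rˣ),
      (∀ i, A i ⊆ s) ∧ (∀ i, (A i).Nonempty) ∧
      (∀ j ∈ s, ∃! i, j ∈ A i) ∧ (∏ i, (u i : R)) = (c : R) ∧
      ∀ i, π i = u i * ∏ j ∈ A i, p j := by
  intro k
  induction k with
  | zero =>
    intro π _ _ s c hprod
    simp only [Finset.univ_eq_empty, Finset.prod_empty] at hprod
    have hunit : IsUnit (∏ i ∈ s, p i) :=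
      isUnit_of_mul_isUnit_right (hprod ▸ isUnit_one)
    have hs : s = ∅ := by
      by_contra hne
      obtain ⟨j, hj⟩ := Finset.nonempty_iff_ne_empty.mpr hne
      exact (hp j).2.1 (isUnit_of_dvd_unit (Finset.dvd_prod_of_mem _ hj) hunit)
    subst hs
    simp only [Finset.prod_empty, mul_one] at hprod
    exact ⟨fun i => i.elim0, fun i => i.elim0, fun i => i.elim0, fun i => i.elim0,
      by simp, by simp only [Finset.univ_eq_empty, Finset.prod_empty]; exact hprod, fun i => i.elim0⟩
  | succ k ih =>
    intro π hπ0 hπu s c hprod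
    rw [Fin.prod_univ_succ] at hprod
    have hdvd : π 0 ∣ ∏ j ∈ s, p j := by
      refine (Units.dvd_mul_left (u := c)).mp ?_
      exact ⟨∏ i : Fin k, π i.succ, hprod.symm⟩
    obtain ⟨A₀, u₀, hA₀s, hπ0e⟩ := stmt18_div p hp s (π 0) (hπ0 0) hdvd
    have hA₀ne : A₀.Nonempty := by
      rcases Finset.eq_empty_or_nonempty A₀ with h | h
      · exfalso; apply hπu 0; rw [hπ0e, h]; simp
      · exact h
    have hsplit : ∏ j ∈ s, p j = (∏ j ∈ A₀, p j) * ∏ j ∈ s \ A₀, p j := by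
      rw [← Finset.prod_union (Finset.disjoint_sdiff), Finset.union_sdiff_of_subset hA₀s]
    have hA₀0 : (∏ j ∈ A₀, p j) ≠ 0 := Finset.prod_ne_zero_iff.mpr fun j _ => (hp j).ne_zero
    have hu₀ : (u₀ : R) * ((u₀⁻¹ : Rˣ) : R) = 1 := u₀.mul_inv
    have hrest : (∏ i : Fin k, π i.succ) = ((c * u₀⁻¹ : Rˣ) : R) * ∏ j ∈ s \ A₀, p j := by
      have h0 : (u₀ : R) * ∏ j ∈ A₀, p j ≠ 0 := mul_ne_zero u₀.ne_zero hA₀0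
      apply mul_left_cancel₀ h0
      rw [mul_assoc, ← mul_assoc (u₀ : R), ← hπ0e, hprod, hsplit, Units.val_mul]
      rw [hπ0e]
      linear_combination (-((c : R) * (∏ j ∈ A₀, p j) * ∏ j ∈ s \ A₀, p j)) * hu₀
    obtain ⟨A', u', hA's, hA'ne, hA'part, hu'prod, hπ'e⟩ :=
      ih (fun i => π i.succ) (fun i => hπ0 _) (fun i => hπu _) (s \ A₀) (c * u₀⁻¹) hrest
    refine ⟨Fin.cons A₀ A', Fin.cons u₀ u', ?_, ?_, ?_, ?_, ?_⟩
    · intro i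
      refine Fin.cases ?_ ?_ i
      · simpa using hA₀s
      · intro i'; simpa using (hA's i').trans (Finset.sdiff_subset)
    · intro i
      refine Fin.cases ?_ ?_ i
      · simpa using hA₀ne
      · intro i'; simpa using hA'ne i'
    · intro j hj
      by_cases hjA₀ : j ∈ A₀
      · refine ⟨0, by simpa using hjA₀, ?_⟩
        intro i hi
        induction i using Fin.cases with
        | zero => rfl
        | succ i'' =>
          have hj' : j ∈ A' i'' := by simpa using hi
          exact absurd hjA₀ (Finset.mem_sdiff.mp (hA's i'' hj')).2
      · have hjs : j ∈ s \ A₀ := Finset.mem_sdiff.mpr ⟨hj, hjA₀⟩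
        obtain ⟨i', hi', hi'u⟩ := hA'part j hjs
        refine ⟨i'.succ, by simpa using hi', ?_⟩
        intro i hi
        induction i using Fin.cases with
        | zero => exact absurd (by simpa using hi) hjA₀
        | succ i'' =>
          have : i'' = i' := hi'u i'' (by simpa using hi)
          rw [this]
    · rw [Fin.prod_univ_succ]
      simp only [Fin.cons_zero, Fin.cons_succ]
      rw [hu'prod, Units.val_mul]
      rw [← mul_assoc]
      rw [mul_comm (u₀ : R) (c : R), mul_assoc, hu₀, mul_one]
    · intro i
      refine Fin.cases ?_ ?_ i
      · simpa using hπ0e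
      · intro i'; simpa using hπ'e i'

/-- Let `O ⊆ R` be an integral extension of atomic domains with `R` a UFD
and `U(R) = U(O)`.  Let `x ∈ O` be a nonzero nonunit with prime factorization
`x = p₁⋯p_n` in `R`, and suppose `x = π₁⋯π_k` with each `π i` irreducible in `O`.  Then
there are a partition of `{1,…,n}` into nonempty sets `A₁, …, A_k` and units
`u₁, …, u_k` of `R` with `u₁⋯u_k = 1` such that `π i = u i · ∏_{j ∈ A i} p j` for
each `i`. -/
theorem stmt_18 {R : Type*} [CommRing R] [IsDomain R] [UniqueFactorizationMonoid R]
    (O : Subring R)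
    (hatomic : ∀ x : ↥O, x ≠ 0 → ¬ IsUnit x →
      ∃ l : Multiset ↥O, (∀ y ∈ l, Irreducible y) ∧ l.prod = x)
    (hintegral : ∀ x : R, ∃ f : Polynomial ↥O, f.Monic ∧ Polynomial.eval₂ O.subtype x f = 0)
    (hunits : ∀ u : Rˣ, (u : R) ∈ O)
    (x : ↥O) (hx0 : x ≠ 0) (hxu : ¬ IsUnit x)
    (n : ℕ) (p : Fin n → R) (hp : ∀ i, Prime (p i)) (hxp : (x : R) = ∏ i, p i)
    (k : ℕ) (π : Fin k → ↥O) (hπ : ∀ i, Irreducible (π i)) (hxπ : x = ∏ i, π i) :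
    ∃ (A : Fin k → Finset (Fin n)) (u : Fin k → Rˣ),
      (∀ i, (A i).Nonempty) ∧
      (∀ j : Fin n, ∃! i, j ∈ A i) ∧
      (∏ i, (u i : R)) = 1 ∧
      ∀ i, (π i : R) = (u i : R) * ∏ j ∈ A i, p j := by
  have hπ0 : ∀ i, (π i : R) ≠ 0 := by
    intro i h
    exact (hπ i).ne_zero (Subtype.ext h)
  have hπnu : ∀ i, ¬ IsUnit ((π i : R)) := by
    intro i hu
    obtain ⟨v, hv⟩ := hu
    apply (hπ i).not_isUnit
    refine IsUnit.of_mul_eq_one ⟨(v⁻¹ : Rˣ), hunits v⁻¹⟩ ?_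
    ext
    push_cast
    rw [← hv]
    exact v.mul_inv
  have hprod : (∏ i, ((π i : R))) = ((1 : Rˣ) : R) * ∏ j ∈ Finset.univ, p j := by
    rw [Units.val_one, one_mul]
    have : ((∏ i, π i : ↥O) : R) = ∏ i, ((π i : R)) := by
      push_cast; rfl
    rw [← this, ← hxπ, hxp]
  obtain ⟨A, u, _, hAne, hApart, huprod, hπe⟩ :=
    stmt18_part p hp k (fun i => (π i : R)) hπ0 hπnu Finset.univ 1 hprod
  exact ⟨A, u, hAne, fun j => hApart j (Finset.mem_univ j), by simpa using huprod, hπe⟩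
end
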